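/- arXiv:2401.10738 — 6 statements merged into one kernel-verified Lean document; each statement's English description precedes it below -/
import Mathlib

section
/- For every extreme point (x*, y*, w*, z*, s*) of the polytope P = conv(Q) and every time period t ∈ {1, …, T}, the stock level s*_t belongs to the set S = { K − Σ_{t∈𝒯} Σ_{v∈𝒱} (λ¹_{v,t} L^y_{v,t} + λ²_{v,t} U^y_{v,t} + λ³_{v,t} L^x_{v,t} + λ⁴_{v,t} U^x_{v,t}) : K ∈ {0, s₀, L^s_1, …, L^s_T, U^s_1, …, U^s_T}, λ^j_{v,t} ∈ {−1, 0, 1} for j = 1,2,3,4 }. -/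
open scoped BigOperators

/-- A point of the warehouse problem: purchases `x`, sales `y`,
purchase indicators `w`, sale indicators `z` (all indexed by vendor and time),
and stock levels `s` (indexed by time). -/
abbrev WPoint (V T : ℕ) :=
  (Fin V → Fin T → ℝ) × (Fin V → Fin T → ℝ) × (Fin V → Fin T → ℝ) ×
    (Fin V → Fin T → ℝ) × (Fin T → ℝ)

namespace WPoint

variable {V T : ℕ}

def x (p : WPoint V T) : Fin V → Fin T → ℝ := p.1
def y (p : WPoint V T) : Fin V → Fin T → ℝ := p.2.1
def w (p : WPoint V T) : Fin V → Fin T → ℝ := p.2.2.1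
def z (p : WPoint V T) : Fin V → Fin T → ℝ := p.2.2.2.1
def s (p : WPoint V T) : Fin T → ℝ := p.2.2.2.2

end WPoint

/-- A selector of one of the `x`/`y` decision variables. -/
structure WVar (V T : ℕ) where
  isX : Bool
  v : Fin V
  t : Fin T

/-- The value of the selected variable. -/
def WVar.val {V T : ℕ} (x y : Fin V → Fin T → ℝ) (u : WVar V T) : ℝ :=
  if u.isX then x u.v u.t else y u.v u.t

/-- The lower bound of the selected variable. -/
def WVar.lb {V T : ℕ} (Lx Ly : Fin V → Fin T → ℝ) (u : WVar V T) : ℝ :=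
  if u.isX then Lx u.v u.t else Ly u.v u.t

/-- The upper bound of the selected variable. -/
def WVar.ub {V T : ℕ} (Ux Uy : Fin V → Fin T → ℝ) (u : WVar V T) : ℝ :=
  if u.isX then Ux u.v u.t else Uy u.v u.t

/-- A generalized complementarity constraint `(V₁ - B₁)(V₂ - B₂) = 0`. -/
structure CompCon (V T : ℕ) where
  V1 : WVar V T
  V2 : WVar V T
  B1 : ℝ
  B2 : ℝ

/-- Validity of a complementarity tuple: the time index of `V₁` is at most that of `V₂`,
and each constant is zero or the lower or upper bound of the corresponding variable. -/
def ValidCompCon {V T : ℕ} (Lx Ux Ly Uy : Fin V → Fin T → ℝ) (c : CompCon V T) : Prop :=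
  c.V1.t ≤ c.V2.t ∧
  (c.B1 = 0 ∨ c.B1 = c.V1.lb Lx Ly ∨ c.B1 = c.V1.ub Ux Uy) ∧
  (c.B2 = 0 ∨ c.B2 = c.V2.lb Lx Ly ∨ c.B2 = c.V2.ub Ux Uy)

/-- The stock level at the end of period `t - 1` (the initial stock `s0` when `t = 1`). -/
def prevStock {T : ℕ} (s0 : ℝ) (s : Fin T → ℝ) (t : Fin T) : ℝ :=
  if _ : (t : ℕ) = 0 then s0 else s ⟨(t : ℕ) - 1, lt_of_le_of_lt (Nat.sub_le _ _) t.isLt⟩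

/-- The feasible region `Q` of the warehouse problem. -/
def Qset {V T : ℕ} (s0 : ℝ) (Ls Us : Fin T → ℝ) (Lx Ux Ly Uy : Fin V → Fin T → ℝ)
    (C : Finset (CompCon V T)) : Set (WPoint V T) :=
  { p | (∀ t, p.s t = prevStock s0 p.s t - ∑ v, p.y v t + ∑ v, p.x v t) ∧
        (∀ t, Ls t ≤ p.s t ∧ p.s t ≤ Us t) ∧
        (∀ t, ∑ v, p.y v t ≤ prevStock s0 p.s t) ∧
        (∀ c ∈ C, (c.V1.val p.x p.y - c.B1) * (c.V2.val p.x p.y - c.B2) = 0) ∧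
        (∀ v t, Ly v t * p.z v t ≤ p.y v t ∧ p.y v t ≤ Uy v t * p.z v t) ∧
        (∀ v t, Lx v t * p.w v t ≤ p.x v t ∧ p.x v t ≤ Ux v t * p.w v t) ∧
        (∀ v t, p.w v t = 0 ∨ p.w v t = 1) ∧
        (∀ v t, p.z v t = 0 ∨ p.z v t = 1) }

/-- The set `S` of candidate extreme stock levels. -/
def Sset {V T : ℕ} (s0 : ℝ) (Ls Us : Fin T → ℝ) (Lx Ux Ly Uy : Fin V → Fin T → ℝ) :
    Set ℝ :=
  { r | ∃ (K : ℝ) (lam : Fin 4 → Fin V → Fin T → ℝ),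
      (K = 0 ∨ K = s0 ∨ (∃ t, K = Ls t) ∨ (∃ t, K = Us t)) ∧
      (∀ j v t, lam j v t = -1 ∨ lam j v t = 0 ∨ lam j v t = 1) ∧
      r = K - ∑ t, ∑ v,
        (lam 0 v t * Ly v t + lam 1 v t * Uy v t + lam 2 v t * Lx v t + lam 3 v t * Ux v t) }

/-!
Call a variable free if its value is not `0` and not one of its bounds. Scanning backwards
from period `t`, as long as a period has no free variable, a slack sales constraint and a
closing stock strictly inside its bounds, `s_t` differs from the earlier stock by a signed sum
of bounds. The scan ends at `s₀`, at a stock on one of its bounds, or at a tight sales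
constraint (the stock is then that period's purchases): each puts `s_t` in `S`. Otherwise it
ends at a free variable that can raise the stock from its period on. A forward scan likewise
puts `s_t` in `S` or finds a free variable that can lower the stock again, or reaches the
horizon. So if `s_t ∉ S`, moving these two variables by `±ε` keeps the point in `Q`, and the
point is the midpoint of two points of `Q`: it is not extreme.
-/

open Filter Topology Set

theorem eq_zero_of_mem_extremePoints_of_eventually_add_smul_mem {E : Type*} [AddCommGroup E]
    [Module ℝ E] {A : Set E} {p d : E} (hp : p ∈ A.extremePoints ℝ)
    (hd : ∀ᶠ ε in 𝓝 (0 : ℝ), p + ε • d ∈ A) : d = 0 := by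
  have hd' : ∀ᶠ ε in 𝓝 (0 : ℝ), p + (-ε) • d ∈ A :=
    (continuous_neg.tendsto' 0 0 neg_zero).eventually hd
  obtain ⟨ε, ⟨h₁, h₂⟩, hε⟩ :=
    (((hd.and hd').filter_mono nhdsWithin_le_nhds).and self_mem_nhdsWithin :
      ∀ᶠ ε in 𝓝[≠] (0 : ℝ), _ ∧ ε ≠ 0).exists
  rw [neg_smul, ← sub_eq_add_neg] at h₂
  simpa [hε] using hp.2 h₁ h₂ (mem_openSegment_add_sub p (ε • d))

theorem eventually_add_mul_mem_Icc {L U a d : ℝ} (ha : a ∈ Icc L U)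
    (hd : d ≠ 0 → a ∈ Ioo L U) : ∀ᶠ ε in 𝓝 (0 : ℝ), a + ε * d ∈ Icc L U := by
  by_cases h : d = 0
  · simp [h, ha]
  have hlim : Tendsto (fun ε : ℝ => a + ε * d) (𝓝 0) (𝓝 a) :=
    (continuous_const.add (continuous_id.mul continuous_const)).tendsto' 0 a (by simp)
  exact (hlim.eventually (Ioo_mem_nhds (hd h).1 (hd h).2)).mono fun _ h => Ioo_subset_Icc_self h

theorem eventually_add_mul_le_add_mul {a b c e : ℝ} (hab : a ≤ b) (h : c = e ∨ a < b) :
    ∀ᶠ ε in 𝓝 (0 : ℝ), a + ε * c ≤ b + ε * e := by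
  rcases h with rfl | hlt
  · exact Eventually.of_forall fun ε => by linarith
  have hlim : Tendsto (fun ε : ℝ => b + ε * e - (a + ε * c)) (𝓝 0) (𝓝 (b - a)) :=
    ((continuous_const.add (continuous_id.mul continuous_const)).sub
      (continuous_const.add (continuous_id.mul continuous_const))).tendsto' 0 _ (by simp)
  exact (hlim.eventually (lt_mem_nhds (sub_pos.2 hlt))).mono fun _ h => by linarith

theorem eq_or_eq_of_mem_Icc_of_notMem_Ioo {α : Type*} [LinearOrder α] {a L U : α}
    (h : a ∈ Icc L U) (h' : a ∉ Ioo L U) : a = L ∨ a = U :=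
  (eq_endpoints_or_mem_Ioo_of_mem_Icc h).imp_right (Or.resolve_right · h')

theorem mem_Ioo_mul_of_notMem {L U a w : ℝ} (hw : w = 0 ∨ w = 1) (h : L * w ≤ a ∧ a ≤ U * w)
    (ha : a ∉ ({0, L, U} : Set ℝ)) : a ∈ Ioo (L * w) (U * w) := by
  simp only [mem_insert_iff, mem_singleton_iff, not_or] at ha
  rcases hw with rfl | rfl
  · exact absurd (le_antisymm (by simpa using h.2) (by simpa using h.1)) ha.1
  · simp only [mul_one] at h ⊢
    exact ⟨lt_of_le_of_ne h.1 (Ne.symm ha.2.1), lt_of_le_of_ne h.2 ha.2.2⟩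

theorem exists_signType_mul_add_mul {ι : Type*} {P : ι → Prop} {a L U : ι → ℝ}
    (h : ∀ i, P i → a i ∈ ({0, L i, U i} : Set ℝ)) :
    ∃ c c' : ι → SignType, ∀ i, P i → a i = c i * L i + c' i * U i := by
  have : ∀ i, ∃ c c' : SignType, P i → a i = c * L i + c' * U i := fun i => by
    by_cases hi : P i
    · obtain h | h | h : a i = 0 ∨ a i = L i ∨ a i = U i := h i hi
      exacts [⟨0, 0, fun _ => by simp [h]⟩, ⟨1, 0, fun _ => by simp [h]⟩,
        ⟨0, 1, fun _ => by simp [h]⟩]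
    · exact ⟨0, 0, fun h => absurd h hi⟩
  choose c c' hc using this
  exact ⟨c, c', hc⟩

theorem sum_pi_single_pi_single_self {ι κ R : Type*} [Fintype ι] [DecidableEq ι]
    [DecidableEq κ] [AddCommMonoid R] (i : ι) (j : κ) (c : R) :
    ∑ i', (Pi.single i (Pi.single j c) : ι → κ → R) i' j = c := by
  rw [← Finset.sum_apply, Fintype.sum_pi_single', Pi.single_eq_same]

theorem eq_and_eq_of_pi_single_pi_single_ne_zero {ι κ R : Type*} [DecidableEq ι]
    [DecidableEq κ] [Zero R] {i i' : ι} {j j' : κ} {c : R}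
    (h : (Pi.single i (Pi.single j c) : ι → κ → R) i' j' ≠ 0) : i' = i ∧ j' = j := by
  by_contra hne
  apply h
  by_cases hi : i' = i
  · subst hi
    simp [show j' ≠ j from fun h' => hne ⟨rfl, h'⟩]
  · simp [hi]

theorem WVar.val_add_mul_eq {V T : ℕ} {x y dx dy Lx Ux Ly Uy : Fin V → Fin T → ℝ}
    {u : WVar V T} {B : ℝ} (hB : B = 0 ∨ B = u.lb Lx Ly ∨ B = u.ub Ux Uy) (hu : u.val x y = B)
    (hdx : ∀ v τ, dx v τ ≠ 0 → x v τ ∉ ({0, Lx v τ, Ux v τ} : Set ℝ))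
    (hdy : ∀ v τ, dy v τ ≠ 0 → y v τ ∉ ({0, Ly v τ, Uy v τ} : Set ℝ)) (ε : ℝ) :
    u.val (fun v τ => x v τ + ε * dx v τ) (fun v τ => y v τ + ε * dy v τ) = B := by
  obtain ⟨_ | _, v, τ⟩ := u
  · simp only [WVar.val, WVar.lb, WVar.ub, Bool.false_eq_true, if_false] at hu hB ⊢
    have : dy v τ = 0 := by
      by_contra h
      exact hdy _ _ h (by rcases hB with rfl | rfl | rfl <;> simp [hu])
    simp [this, hu]
  · simp only [WVar.val, WVar.lb, WVar.ub, if_true] at hu hB ⊢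
    have : dx v τ = 0 := by
      by_contra h
      exact hdx _ _ h (by rcases hB with rfl | rfl | rfl <;> simp [hu])
    simp [this, hu]

namespace Warehouse

variable {V T : ℕ}

def periodTotal (x : Fin V → Fin T → ℝ) (n : ℕ) : ℝ :=
  if h : n < T then ∑ v, x v ⟨n, h⟩ else 0

/-- The stock after `n` periods: `stockAt s0 s (τ + 1) = s τ`, with junk value `0` beyond `T`. -/
def stockAt (s0 : ℝ) (s : Fin T → ℝ) : ℕ → ℝ
  | 0 => s0
  | n + 1 => if h : n < T then s ⟨n, h⟩ else 0

theorem periodTotal_val (x : Fin V → Fin T → ℝ) (τ : Fin T) :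
    periodTotal x τ = ∑ v, x v τ := by
  simp [periodTotal]

theorem periodTotal_eq_sum_ite (x : Fin V → Fin T → ℝ) (n : ℕ) :
    periodTotal x n = ∑ τ : Fin T, if (τ : ℕ) = n then ∑ v, x v τ else 0 := by
  by_cases h : n < T
  · rw [Finset.sum_eq_single ⟨n, h⟩ (fun τ _ hτ => if_neg fun h' => hτ (Fin.ext h'))
      (by simp)]
    simp [periodTotal, h]
  · rw [Finset.sum_eq_zero fun τ _ => if_neg (by omega)]
    simp [periodTotal, h]

theorem sum_periodTotal (x : Fin V → Fin T → ℝ) (I : Finset ℕ) :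
    ∑ n ∈ I, periodTotal x n = ∑ τ : Fin T, if (τ : ℕ) ∈ I then ∑ v, x v τ else 0 := by
  simp_rw [periodTotal_eq_sum_ite]
  rw [Finset.sum_comm]
  simp [Finset.sum_ite_eq]

theorem stockAt_succ (s0 : ℝ) (s : Fin T → ℝ) (τ : Fin T) : stockAt s0 s (τ + 1) = s τ := by
  simp [stockAt]

theorem prevStock_eq_stockAt (s0 : ℝ) (s : Fin T → ℝ) (τ : Fin T) :
    prevStock s0 s τ = stockAt s0 s τ := by
  obtain ⟨_ | n, h⟩ := τ
  · simp [prevStock, stockAt]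
  · simp [prevStock, stockAt, Nat.lt_of_succ_lt h]

theorem prevStock_add_mul (s0 : ℝ) (s ds : Fin T → ℝ) (ε : ℝ) (τ : Fin T) :
    prevStock s0 (fun τ => s τ + ε * ds τ) τ = prevStock s0 s τ + ε * prevStock 0 ds τ := by
  unfold prevStock
  split_ifs <;> simp

theorem stockAt_eq_add_sum_Ico {s0 : ℝ} {x y : Fin V → Fin T → ℝ} {s : Fin T → ℝ}
    (hbal : ∀ τ, s τ = prevStock s0 s τ - ∑ v, y v τ + ∑ v, x v τ) {a c : ℕ} (hac : a ≤ c)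
    (hcT : c ≤ T) :
    stockAt s0 s c =
      stockAt s0 s a + ∑ n ∈ Finset.Ico a c, (periodTotal x n - periodTotal y n) := by
  induction c, hac using Nat.le_induction with
  | base => simp
  | succ c hac ih =>
    rw [Finset.sum_Ico_succ_top hac, ← add_assoc, ← ih (by omega)]
    have h := hbal ⟨c, by omega⟩
    rw [prevStock_eq_stockAt] at h
    rw [stockAt_succ s0 s ⟨c, by omega⟩, periodTotal_val x ⟨c, by omega⟩,
      periodTotal_val y ⟨c, by omega⟩]
    linarith

theorem mem_Sset_of_eq {s0 K r : ℝ} {Ls Us : Fin T → ℝ} {Lx Ux Ly Uy x y : Fin V → Fin T → ℝ}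
    (hK : K = 0 ∨ K = s0 ∨ (∃ t, K = Ls t) ∨ (∃ t, K = Us t)) (σ : SignType) {I J : Finset ℕ}
    (hI : ∀ τ : Fin T, (τ : ℕ) ∈ I → ∀ v, x v τ ∈ ({0, Lx v τ, Ux v τ} : Set ℝ))
    (hJ : ∀ τ : Fin T, (τ : ℕ) ∈ J → ∀ v, y v τ ∈ ({0, Ly v τ, Uy v τ} : Set ℝ))
    (hr : r = K + σ * (∑ n ∈ I, periodTotal x n - ∑ n ∈ J, periodTotal y n)) :
    r ∈ Sset s0 Ls Us Lx Ux Ly Uy := by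
  classical
  obtain ⟨cx, cx', hcx⟩ :=
    exists_signType_mul_add_mul (P := fun i : Fin T × Fin V => (i.1 : ℕ) ∈ I)
      (a := fun i => x i.2 i.1) (L := fun i => Lx i.2 i.1) (U := fun i => Ux i.2 i.1)
      fun i hi => hI i.1 hi i.2
  obtain ⟨cy, cy', hcy⟩ :=
    exists_signType_mul_add_mul (P := fun i : Fin T × Fin V => (i.1 : ℕ) ∈ J)
      (a := fun i => y i.2 i.1) (L := fun i => Ly i.2 i.1) (U := fun i => Uy i.2 i.1)
      fun i hi => hJ i.1 hi i.2
  let eI : Fin T → SignType := fun τ => if (τ : ℕ) ∈ I then σ else 0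
  let eJ : Fin T → SignType := fun τ => if (τ : ℕ) ∈ J then σ else 0
  let coeffs : Fin T → Fin V → Fin 4 → SignType := fun τ v =>
    ![eJ τ * cy (τ, v), eJ τ * cy' (τ, v), -(eI τ * cx (τ, v)), -(eI τ * cx' (τ, v))]
  let lam : Fin 4 → Fin V → Fin T → ℝ := fun j v τ => coeffs τ v j
  have hterm : ∀ τ v, lam 0 v τ * Ly v τ + lam 1 v τ * Uy v τ + lam 2 v τ * Lx v τ
      + lam 3 v τ * Ux v τ
      = σ * ((if (τ : ℕ) ∈ J then y v τ else 0) - if (τ : ℕ) ∈ I then x v τ else 0) := by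
    intro τ v
    simp only [lam, coeffs, eI, eJ]
    split_ifs with hτJ hτI hτI <;> simp [hcx (τ, v), hcy (τ, v), *] <;> ring
  have hsum : ∀ τ : Fin T, ∑ v,
      (σ : ℝ) * ((if (τ : ℕ) ∈ J then y v τ else 0) - if (τ : ℕ) ∈ I then x v τ else 0) =
      σ * ((if (τ : ℕ) ∈ J then ∑ v, y v τ else 0) - if (τ : ℕ) ∈ I then ∑ v, x v τ else 0) := by
    intro τ
    rw [← Finset.mul_sum, Finset.sum_sub_distrib]
    split_ifs <;> simp
  refine ⟨K, lam, hK, fun j v τ => ?_, ?_⟩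
  · rcases (coeffs τ v j).trichotomy with h | h | h <;> simp [lam, h]
  · simp only [hterm, hsum, hr, sum_periodTotal, ← Finset.mul_sum, Finset.sum_sub_distrib]
    ring

theorem add_smul_mk (p : WPoint V T) (dx dy : Fin V → Fin T → ℝ) (ds : Fin T → ℝ) (ε : ℝ) :
    p + ε • ((dx, dy, 0, 0, ds) : WPoint V T) = ((fun v τ => p.x v τ + ε * dx v τ),
      (fun v τ => p.y v τ + ε * dy v τ), p.w, p.z, fun τ => p.s τ + ε * ds τ) :=
  Prod.ext rfl <| Prod.ext rfl <| Prod.ext (by simp [WPoint.w]) <| Prod.ext (by simp [WPoint.z]) rfl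

variable {s0 : ℝ} {Ls Us : Fin T → ℝ} {Lx Ux Ly Uy : Fin V → Fin T → ℝ}
  {C : Finset (CompCon V T)} {p : WPoint V T}

theorem eventually_add_smul_mem_Qset (hC : ∀ c ∈ C, ValidCompCon Lx Ux Ly Uy c)
    (hp : p ∈ Qset s0 Ls Us Lx Ux Ly Uy C) {dx dy : Fin V → Fin T → ℝ} {ds : Fin T → ℝ}
    (hbal : ∀ τ, ds τ = prevStock 0 ds τ - ∑ v, dy v τ + ∑ v, dx v τ)
    (hdx : ∀ v τ, dx v τ ≠ 0 → p.x v τ ∉ ({0, Lx v τ, Ux v τ} : Set ℝ))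
    (hdy : ∀ v τ, dy v τ ≠ 0 → p.y v τ ∉ ({0, Ly v τ, Uy v τ} : Set ℝ))
    (hds : ∀ τ, ds τ ≠ 0 → p.s τ ∈ Ioo (Ls τ) (Us τ))
    (hsales : ∀ τ, ∑ v, dy v τ = prevStock 0 ds τ ∨ ∑ v, p.y v τ < prevStock s0 p.s τ) :
    ∀ᶠ ε in 𝓝 (0 : ℝ),
      p + ε • ((dx, dy, 0, 0, ds) : WPoint V T) ∈ Qset s0 Ls Us Lx Ux Ly Uy C := by
  obtain ⟨hpbal, hps, hpsales, hpcomp, hpy, hpx, hpw, hpz⟩ := hp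
  have hstock : ∀ᶠ ε in 𝓝 (0 : ℝ), ∀ τ, p.s τ + ε * ds τ ∈ Icc (Ls τ) (Us τ) :=
    eventually_all.2 fun τ => eventually_add_mul_mem_Icc (hps τ) (hds τ)
  have hsales' : ∀ᶠ ε in 𝓝 (0 : ℝ), ∀ τ,
      ∑ v, p.y v τ + ε * ∑ v, dy v τ ≤ prevStock s0 p.s τ + ε * prevStock 0 ds τ :=
    eventually_all.2 fun τ => eventually_add_mul_le_add_mul (hpsales τ) (hsales τ)
  have hy : ∀ᶠ ε in 𝓝 (0 : ℝ), ∀ v τ,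
      p.y v τ + ε * dy v τ ∈ Icc (Ly v τ * p.z v τ) (Uy v τ * p.z v τ) :=
    eventually_all.2 fun v => eventually_all.2 fun τ => eventually_add_mul_mem_Icc (hpy v τ)
      fun h => mem_Ioo_mul_of_notMem (hpz v τ) (hpy v τ) (hdy v τ h)
  have hx : ∀ᶠ ε in 𝓝 (0 : ℝ), ∀ v τ,
      p.x v τ + ε * dx v τ ∈ Icc (Lx v τ * p.w v τ) (Ux v τ * p.w v τ) :=
    eventually_all.2 fun v => eventually_all.2 fun τ => eventually_add_mul_mem_Icc (hpx v τ)
      fun h => mem_Ioo_mul_of_notMem (hpw v τ) (hpx v τ) (hdx v τ h)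
  filter_upwards [hstock, hsales', hy, hx] with ε hstock hsales' hy hx
  rw [add_smul_mk]
  refine ⟨fun τ => ?_, hstock, fun τ => ?_, fun c hc => ?_, hy, hx, hpw, hpz⟩
  · show p.s τ + ε * ds τ = prevStock s0 (fun τ => p.s τ + ε * ds τ) τ
      - ∑ v, (p.y v τ + ε * dy v τ) + ∑ v, (p.x v τ + ε * dx v τ)
    simp only [prevStock_add_mul, Finset.sum_add_distrib, ← Finset.mul_sum]
    linear_combination hpbal τ + ε * hbal τ
  · show ∑ v, (p.y v τ + ε * dy v τ) ≤ prevStock s0 (fun τ => p.s τ + ε * ds τ) τ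
    simpa only [prevStock_add_mul, Finset.sum_add_distrib, ← Finset.mul_sum] using hsales' τ
  · obtain ⟨-, hB1, hB2⟩ := hC c hc
    show (c.V1.val (fun v τ => p.x v τ + ε * dx v τ) (fun v τ => p.y v τ + ε * dy v τ) - c.B1) *
      (c.V2.val (fun v τ => p.x v τ + ε * dx v τ) (fun v τ => p.y v τ + ε * dy v τ) - c.B2) = 0
    rcases mul_eq_zero.1 (hpcomp c hc) with h | h
    · rw [WVar.val_add_mul_eq hB1 (sub_eq_zero.1 h) hdx hdy, sub_self, zero_mul]
    · rw [WVar.val_add_mul_eq hB2 (sub_eq_zero.1 h) hdx hdy, sub_self, mul_zero]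

/-- `(gx, gy)` moves only free variables of period `k` and raises its net inflow by `c`; `ℓ` is
the change of its opening stock, which its sales must follow unless their constraint is slack. -/
structure IsShiftAt (s0 : ℝ) (Lx Ux Ly Uy : Fin V → Fin T → ℝ) (p : WPoint V T) (k : ℕ)
    (c ℓ : ℝ) (gx gy : Fin V → Fin T → ℝ) : Prop where
  support_x : ∀ v τ, gx v τ ≠ 0 → (τ : ℕ) = k ∧ p.x v τ ∉ ({0, Lx v τ, Ux v τ} : Set ℝ)
  support_y : ∀ v τ, gy v τ ≠ 0 → (τ : ℕ) = k ∧ p.y v τ ∉ ({0, Ly v τ, Uy v τ} : Set ℝ)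
  net : ∀ τ : Fin T, (τ : ℕ) = k → ∑ v, gx v τ - ∑ v, gy v τ = c
  sales : ∀ τ : Fin T, (τ : ℕ) = k → ∑ v, gy v τ = ℓ ∨ ∑ v, p.y v τ < prevStock s0 p.s τ

namespace IsShiftAt

variable {c ℓ : ℝ} {gx gy : Fin V → Fin T → ℝ} {k : ℕ}

theorem sum_x_eq_zero (h : IsShiftAt s0 Lx Ux Ly Uy p k c ℓ gx gy) {τ : Fin T}
    (hτ : (τ : ℕ) ≠ k) : ∑ v, gx v τ = 0 :=
  Finset.sum_eq_zero fun v _ => by_contra fun hv => hτ (h.support_x v τ hv).1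

theorem sum_y_eq_zero (h : IsShiftAt s0 Lx Ux Ly Uy p k c ℓ gx gy) {τ : Fin T}
    (hτ : (τ : ℕ) ≠ k) : ∑ v, gy v τ = 0 :=
  Finset.sum_eq_zero fun v _ => by_contra fun hv => hτ (h.support_y v τ hv).1

theorem net_eq (h : IsShiftAt s0 Lx Ux Ly Uy p k c ℓ gx gy) (τ : Fin T) :
    ∑ v, gx v τ - ∑ v, gy v τ = if (τ : ℕ) = k then c else 0 := by
  split_ifs with hτ
  · exact h.net τ hτ
  · rw [h.sum_x_eq_zero hτ, h.sum_y_eq_zero hτ, sub_zero]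

theorem net_add_eq {c' ℓ' : ℝ} {gx' gy' : Fin V → Fin T → ℝ} {k' : ℕ}
    (h : IsShiftAt s0 Lx Ux Ly Uy p k c ℓ gx gy) (h' : IsShiftAt s0 Lx Ux Ly Uy p k' c' ℓ' gx' gy')
    (τ : Fin T) : ∑ v, (gx + gx') v τ - ∑ v, (gy + gy') v τ
      = (if (τ : ℕ) = k then c else 0) + if (τ : ℕ) = k' then c' else 0 := by
  simp only [Pi.add_apply, Finset.sum_add_distrib, ← h.net_eq, ← h'.net_eq]
  ring

end IsShiftAt

section

variable {c ℓ : ℝ}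

theorem isShiftAt_of_x {v : Fin V} {τ : Fin T} (hx : p.x v τ ∉ ({0, Lx v τ, Ux v τ} : Set ℝ))
    (hℓ : 0 = ℓ ∨ ∑ v, p.y v τ < prevStock s0 p.s τ) :
    IsShiftAt s0 Lx Ux Ly Uy p τ c ℓ (Pi.single v (Pi.single τ c)) 0 where
  support_x v' τ' h := by
    obtain ⟨rfl, rfl⟩ := eq_and_eq_of_pi_single_pi_single_ne_zero h
    exact ⟨rfl, hx⟩
  support_y _ _ h := absurd rfl h
  net τ' hτ' := by
    rw [Fin.ext hτ', sum_pi_single_pi_single_self]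
    simp
  sales τ' hτ' := by
    rw [Fin.ext hτ']
    simpa using hℓ

theorem isShiftAt_of_y {v : Fin V} {τ : Fin T} (hy : p.y v τ ∉ ({0, Ly v τ, Uy v τ} : Set ℝ))
    (hℓ : -c = ℓ ∨ ∑ v, p.y v τ < prevStock s0 p.s τ) :
    IsShiftAt s0 Lx Ux Ly Uy p τ c ℓ 0 (Pi.single v (Pi.single τ (-c))) where
  support_x _ _ h := absurd rfl h
  support_y v' τ' h := by
    obtain ⟨rfl, rfl⟩ := eq_and_eq_of_pi_single_pi_single_ne_zero h
    exact ⟨rfl, hy⟩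
  net τ' hτ' := by
    rw [Fin.ext hτ', sum_pi_single_pi_single_self]
    simp
  sales τ' hτ' := by
    rw [Fin.ext hτ', sum_pi_single_pi_single_self]
    simpa using hℓ

theorem isShiftAt_horizon : IsShiftAt s0 Lx Ux Ly Uy p T c ℓ 0 0 where
  support_x _ _ h := absurd rfl h
  support_y _ _ h := absurd rfl h
  net τ hτ := absurd τ.isLt (by omega)
  sales τ hτ := absurd τ.isLt (by omega)

end

def stockShift (b f : ℕ) (τ : Fin T) : ℝ :=
  if b ≤ τ ∧ (τ : ℕ) < f then 1 else 0

theorem prevStock_stockShift (b f : ℕ) (τ : Fin T) :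
    prevStock 0 (stockShift b f) τ = if b < τ ∧ (τ : ℕ) ≤ f then 1 else 0 := by
  unfold prevStock stockShift
  split_ifs <;> simp_all <;> omega

theorem eventually_add_smul_shift_mem_Qset (hC : ∀ c ∈ C, ValidCompCon Lx Ux Ly Uy c)
    (hp : p ∈ Qset s0 Ls Us Lx Ux Ly Uy C) {b f : ℕ} (hbf : b < f)
    {ux uy gx gy : Fin V → Fin T → ℝ} (hup : IsShiftAt s0 Lx Ux Ly Uy p b 1 0 ux uy)
    (hdown : IsShiftAt s0 Lx Ux Ly Uy p f (-1) 1 gx gy)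
    (hstock : ∀ τ : Fin T, b ≤ τ → (τ : ℕ) < f → p.s τ ∈ Ioo (Ls τ) (Us τ))
    (hslack : ∀ τ : Fin T, b < τ → (τ : ℕ) < f → ∑ v, p.y v τ < prevStock s0 p.s τ) :
    ∀ᶠ ε in 𝓝 (0 : ℝ), p + ε • ((ux + gx, uy + gy, 0, 0, stockShift b f) : WPoint V T) ∈
      Qset s0 Ls Us Lx Ux Ly Uy C := by
  refine eventually_add_smul_mem_Qset hC hp (fun τ => ?_) (fun v τ h => ?_) (fun v τ h => ?_)
    (fun τ h => ?_) fun τ => ?_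
  · have := hup.net_add_eq hdown τ
    rw [prevStock_stockShift, stockShift]
    split_ifs at this ⊢ <;> first | omega | linarith
  · by_cases hu : ux v τ = 0
    · exact (hdown.support_x v τ (by simpa [hu] using h)).2
    · exact (hup.support_x v τ hu).2
  · by_cases hu : uy v τ = 0
    · exact (hdown.support_y v τ (by simpa [hu] using h)).2
    · exact (hup.support_y v τ hu).2
  · rw [stockShift] at h
    split_ifs at h with hτ
    · exact hstock τ hτ.1 hτ.2
    · exact absurd rfl h
  · rw [prevStock_stockShift]
    simp only [Pi.add_apply, Finset.sum_add_distrib]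
    by_cases hτb : (τ : ℕ) = b
    · rw [hdown.sum_y_eq_zero (by omega), if_neg (by omega), add_zero]
      exact hup.sales τ hτb
    by_cases hτf : (τ : ℕ) = f
    · rw [hup.sum_y_eq_zero hτb, if_pos (by omega), zero_add]
      exact hdown.sales τ hτf
    rw [hup.sum_y_eq_zero hτb, hdown.sum_y_eq_zero hτf, add_zero]
    split_ifs with h
    · exact Or.inr (hslack τ h.1 (by omega))
    · exact Or.inl rfl

theorem false_of_isShiftAt (hC : ∀ c ∈ C, ValidCompCon Lx Ux Ly Uy c)
    (hp : p ∈ (convexHull ℝ (Qset s0 Ls Us Lx Ux Ly Uy C)).extremePoints ℝ) {b f : ℕ}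
    (hbf : b < f) (hfT : f ≤ T) {ux uy gx gy : Fin V → Fin T → ℝ}
    (hup : IsShiftAt s0 Lx Ux Ly Uy p b 1 0 ux uy)
    (hdown : IsShiftAt s0 Lx Ux Ly Uy p f (-1) 1 gx gy)
    (hstock : ∀ τ : Fin T, b ≤ τ → (τ : ℕ) < f → p.s τ ∈ Ioo (Ls τ) (Us τ))
    (hslack : ∀ τ : Fin T, b < τ → (τ : ℕ) < f → ∑ v, p.y v τ < prevStock s0 p.s τ) :
    False := by
  have hd := eq_zero_of_mem_extremePoints_of_eventually_add_smul_mem hp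
    ((eventually_add_smul_shift_mem_Qset hC (extremePoints_convexHull_subset hp) hbf hup hdown
      hstock hslack).mono fun _ h => subset_convexHull ℝ _ h)
  simp only [Prod.mk_eq_zero] at hd
  have := hup.net_add_eq hdown ⟨b, by omega⟩
  rw [hd.1, hd.2.1] at this
  simp [hbf.ne] at this


/-- Across a run of transit periods the stock can be shifted by a constant, and the change of
stock along the run is a signed sum of bounds. -/
structure IsTransit (s0 : ℝ) (Ls Us : Fin T → ℝ) (Lx Ux Ly Uy : Fin V → Fin T → ℝ)
    (p : WPoint V T) (τ : Fin T) : Prop where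
  x_mem : ∀ v, p.x v τ ∈ ({0, Lx v τ, Ux v τ} : Set ℝ)
  y_mem : ∀ v, p.y v τ ∈ ({0, Ly v τ, Uy v τ} : Set ℝ)
  sales_lt : ∑ v, p.y v τ < prevStock s0 p.s τ
  stock_mem : p.s τ ∈ Ioo (Ls τ) (Us τ)

theorem stock_eq_bound_of_notMem_Ioo (hp : p ∈ Qset s0 Ls Us Lx Ux Ly Uy C) {τ : Fin T}
    (h : p.s τ ∉ Ioo (Ls τ) (Us τ)) :
    p.s τ = 0 ∨ p.s τ = s0 ∨ (∃ t, p.s τ = Ls t) ∨ ∃ t, p.s τ = Us t :=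
  (eq_or_eq_of_mem_Icc_of_notMem_Ioo (hp.2.1 τ) h).elim
    (fun h => Or.inr (Or.inr (Or.inl ⟨τ, h⟩))) fun h => Or.inr (Or.inr (Or.inr ⟨τ, h⟩))

theorem upShift_or_isTransit (hp : p ∈ Qset s0 Ls Us Lx Ux Ly Uy C) {t τ : Fin T}
    (hS : p.s t ∉ Sset s0 Ls Us Lx Ux Ly Uy) (hτt : (τ : ℕ) ≤ t)
    (htr : ∀ τ' : Fin T, (τ : ℕ) < τ' → (τ' : ℕ) ≤ t → IsTransit s0 Ls Us Lx Ux Ly Uy p τ') :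
    (p.s τ ∈ Ioo (Ls τ) (Us τ) ∧ ∃ ux uy, IsShiftAt s0 Lx Ux Ly Uy p τ 1 0 ux uy) ∨
      IsTransit s0 Ls Us Lx Ux Ly Uy p τ := by
  have htel : p.s t = stockAt s0 p.s (τ + 1)
      + ∑ m ∈ Finset.Ico ((τ : ℕ) + 1) (t + 1), (periodTotal p.x m - periodTotal p.y m) := by
    rw [← stockAt_succ s0 p.s t]
    exact stockAt_eq_add_sum_Ico hp.1 (by omega) t.isLt
  rw [stockAt_succ, Finset.sum_sub_distrib] at htel
  have htr' : ∀ τ' : Fin T, (τ' : ℕ) ∈ Finset.Ico ((τ : ℕ) + 1) (t + 1) →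
      IsTransit s0 Ls Us Lx Ux Ly Uy p τ' := fun τ' h =>
    htr τ' (by simp at h; omega) (by simp at h; omega)
  by_cases hint : p.s τ ∈ Ioo (Ls τ) (Us τ)
  swap
  · exact absurd (mem_Sset_of_eq (stock_eq_bound_of_notMem_Ioo hp hint) 1
      (fun τ' h => (htr' τ' h).x_mem) (fun τ' h => (htr' τ' h).y_mem)
      (by rw [htel, SignType.coe_one, one_mul])) hS
  by_cases hx : ∃ v, p.x v τ ∉ ({0, Lx v τ, Ux v τ} : Set ℝ)
  · obtain ⟨v, hv⟩ := hx
    exact Or.inl ⟨hint, _, _, isShiftAt_of_x hv (Or.inl rfl)⟩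
  push Not at hx
  by_cases hsl : ∑ v, p.y v τ < prevStock s0 p.s τ
  swap
  · have hτ : p.s τ = periodTotal p.x τ := by
      rw [periodTotal_val]
      linarith [hp.1 τ, hp.2.2.1 τ, not_lt.1 hsl]
    refine absurd (mem_Sset_of_eq (x := p.x) (Or.inl rfl) 1 (I := Finset.Ico τ (t + 1))
      (fun τ' h => ?_) (fun τ' h => (htr' τ' h).y_mem) ?_) hS
    · rcases Nat.eq_or_lt_of_le (Finset.mem_Ico.1 h).1 with h' | h'
      · rwa [Fin.ext h'.symm]
      · exact (htr' τ' (Finset.mem_Ico.2 ⟨h', (Finset.mem_Ico.1 h).2⟩)).x_mem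
    · rw [htel, hτ, Finset.sum_eq_sum_Ico_succ_bot (show (τ : ℕ) < t + 1 by omega)]
      simp only [SignType.coe_one]
      ring
  by_cases hy : ∃ v, p.y v τ ∉ ({0, Ly v τ, Uy v τ} : Set ℝ)
  · obtain ⟨v, hv⟩ := hy
    exact Or.inl ⟨hint, _, _, isShiftAt_of_y hv (Or.inr hsl)⟩
  push Not at hy
  exact Or.inr ⟨hx, hy, hsl, hint⟩

theorem downShift_or_isTransit (hp : p ∈ Qset s0 Ls Us Lx Ux Ly Uy C) {t τ : Fin T}
    (hS : p.s t ∉ Sset s0 Ls Us Lx Ux Ly Uy) (htτ : (t : ℕ) < τ)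
    (htr : ∀ τ' : Fin T, (t : ℕ) < τ' → (τ' : ℕ) < τ → IsTransit s0 Ls Us Lx Ux Ly Uy p τ') :
    (∃ gx gy, IsShiftAt s0 Lx Ux Ly Uy p τ (-1) 1 gx gy) ∨
      IsTransit s0 Ls Us Lx Ux Ly Uy p τ := by
  have htel : ∀ n, (τ : ℕ) ≤ n → n ≤ τ + 1 → stockAt s0 p.s n = p.s t
      + (∑ m ∈ Finset.Ico ((t : ℕ) + 1) n, periodTotal p.x m
        - ∑ m ∈ Finset.Ico ((t : ℕ) + 1) n, periodTotal p.y m) := fun n h₁ h₂ => by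
    rw [← stockAt_succ s0 p.s t, ← Finset.sum_sub_distrib]
    exact stockAt_eq_add_sum_Ico hp.1 (by omega) (by omega)
  have extend : ∀ {P : Fin T → Prop}, P τ →
      (∀ τ' : Fin T, (t : ℕ) < τ' → (τ' : ℕ) < τ → P τ') →
      ∀ τ' : Fin T, (τ' : ℕ) ∈ Finset.Ico ((t : ℕ) + 1) (τ + 1) → P τ' := fun hτ h τ' h' => by
    rcases Nat.lt_succ_iff_lt_or_eq.1 (Finset.mem_Ico.1 h').2 with h'' | h''
    · exact h τ' (by simp at h'; omega) h''
    · rwa [Fin.ext h'']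
  by_cases hy : ∃ v, p.y v τ ∉ ({0, Ly v τ, Uy v τ} : Set ℝ)
  · obtain ⟨v, hv⟩ := hy
    exact Or.inl ⟨_, _, isShiftAt_of_y hv (Or.inl (neg_neg 1))⟩
  push Not at hy
  have hfix_y := extend hy fun τ' h₁ h₂ => (htr τ' h₁ h₂).y_mem
  by_cases hsl : ∑ v, p.y v τ < prevStock s0 p.s τ
  swap
  · -- tight sales: the opening stock is the period's sales, which gives `K = 0`
    have hτ : stockAt s0 p.s τ = periodTotal p.y τ := by
      rw [← prevStock_eq_stockAt, periodTotal_val]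
      exact (not_lt.1 hsl).antisymm (hp.2.2.1 τ)
    refine absurd (mem_Sset_of_eq (Or.inl rfl) (-1) (I := Finset.Ico ((t : ℕ) + 1) τ)
      (fun τ' h => (htr τ' (by simp at h; omega) (by simp at h; omega)).x_mem) hfix_y ?_) hS
    have := htel τ le_rfl (by omega)
    rw [Finset.sum_Ico_succ_top (show (t : ℕ) + 1 ≤ τ by omega), ← hτ]
    simp only [SignType.coe_neg, SignType.coe_one]
    linarith
  by_cases hx : ∃ v, p.x v τ ∉ ({0, Lx v τ, Ux v τ} : Set ℝ)
  · obtain ⟨v, hv⟩ := hx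
    exact Or.inl ⟨_, _, isShiftAt_of_x hv (Or.inr hsl)⟩
  push Not at hx
  by_cases hint : p.s τ ∈ Ioo (Ls τ) (Us τ)
  · exact Or.inr ⟨hx, hy, hsl, hint⟩
  refine absurd (mem_Sset_of_eq (stock_eq_bound_of_notMem_Ioo hp hint) (-1)
    (extend hx fun τ' h₁ h₂ => (htr τ' h₁ h₂).x_mem) hfix_y ?_) hS
  have := htel (τ + 1) (by omega) le_rfl
  rw [stockAt_succ] at this
  simp only [SignType.coe_neg, SignType.coe_one]
  linarith

theorem exists_upShift (hp : p ∈ Qset s0 Ls Us Lx Ux Ly Uy C) {t : Fin T}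
    (hS : p.s t ∉ Sset s0 Ls Us Lx Ux Ly Uy) :
    ∃ b : Fin T, (b : ℕ) ≤ t ∧ p.s b ∈ Ioo (Ls b) (Us b) ∧
      (∃ ux uy, IsShiftAt s0 Lx Ux Ly Uy p b 1 0 ux uy) ∧
      ∀ τ : Fin T, (b : ℕ) < τ → (τ : ℕ) ≤ t → IsTransit s0 Ls Us Lx Ux Ly Uy p τ := by
  suffices key : ∀ n ≤ (t : ℕ) + 1,
      (∀ τ : Fin T, n ≤ (τ : ℕ) → (τ : ℕ) ≤ t → IsTransit s0 Ls Us Lx Ux Ly Uy p τ) →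
      ∃ b : Fin T, (b : ℕ) < n ∧ p.s b ∈ Ioo (Ls b) (Us b) ∧
        (∃ ux uy, IsShiftAt s0 Lx Ux Ly Uy p b 1 0 ux uy) ∧
        ∀ τ : Fin T, (b : ℕ) < τ → (τ : ℕ) ≤ t → IsTransit s0 Ls Us Lx Ux Ly Uy p τ by
    obtain ⟨b, hb, h⟩ := key _ le_rfl fun τ h₁ h₂ => absurd h₂ (by omega)
    exact ⟨b, by omega, h⟩
  intro n
  induction n with
  | zero =>
    intro _ htr
    refine absurd (mem_Sset_of_eq (Or.inr (Or.inl rfl)) 1 (I := Finset.Ico 0 (t + 1))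
      (J := Finset.Ico 0 (t + 1))
      (fun τ h => (htr τ (Nat.zero_le _) (by simp at h; omega)).x_mem)
      (fun τ h => (htr τ (Nat.zero_le _) (by simp at h; omega)).y_mem) ?_) hS
    rw [← stockAt_succ s0 p.s t, stockAt_eq_add_sum_Ico hp.1 (Nat.zero_le _) t.isLt,
      Finset.sum_sub_distrib]
    simp [stockAt]
  | succ n ih =>
    intro hn htr
    let τn : Fin T := ⟨n, by omega⟩
    rcases upShift_or_isTransit hp hS (τ := τn) (by simp [τn]; omega)
      (fun τ h₁ h₂ => htr τ h₁ h₂) with ⟨hint, hshift⟩ | htrn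
    · exact ⟨τn, Nat.lt_succ_self n, hint, hshift, fun τ h₁ h₂ => htr τ h₁ h₂⟩
    obtain ⟨b, hb, h⟩ := ih (by omega) fun τ h₁ h₂ => by
      rcases Nat.eq_or_lt_of_le h₁ with h | h
      · rwa [show τ = τn from Fin.ext h.symm]
      · exact htr τ h h₂
    exact ⟨b, by omega, h⟩

theorem exists_downShift (hp : p ∈ Qset s0 Ls Us Lx Ux Ly Uy C) {t : Fin T}
    (hS : p.s t ∉ Sset s0 Ls Us Lx Ux Ly Uy) :
    ∃ f : ℕ, (t : ℕ) < f ∧ f ≤ T ∧ (∃ gx gy, IsShiftAt s0 Lx Ux Ly Uy p f (-1) 1 gx gy) ∧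
      ∀ τ : Fin T, (t : ℕ) < τ → (τ : ℕ) < f → IsTransit s0 Ls Us Lx Ux Ly Uy p τ := by
  suffices key : ∀ d n, n + d = T → (t : ℕ) < n →
      (∀ τ : Fin T, (t : ℕ) < τ → (τ : ℕ) < n → IsTransit s0 Ls Us Lx Ux Ly Uy p τ) →
      ∃ f : ℕ, n ≤ f ∧ f ≤ T ∧ (∃ gx gy, IsShiftAt s0 Lx Ux Ly Uy p f (-1) 1 gx gy) ∧
        ∀ τ : Fin T, (t : ℕ) < τ → (τ : ℕ) < f → IsTransit s0 Ls Us Lx Ux Ly Uy p τ by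
    obtain ⟨f, hf, h⟩ := key (T - (t + 1)) (t + 1) (by omega) (by omega) fun τ h₁ h₂ => by omega
    exact ⟨f, by omega, h⟩
  intro d
  induction d with
  | zero =>
    intro n hn _ htr
    exact ⟨T, by omega, le_rfl, ⟨0, 0, isShiftAt_horizon⟩, fun τ h₁ h₂ => htr τ h₁ (by omega)⟩
  | succ d ih =>
    intro n hn htn htr
    let τn : Fin T := ⟨n, by omega⟩
    rcases downShift_or_isTransit hp hS (τ := τn) htn htr with hshift | htrn
    · exact ⟨n, le_rfl, by omega, hshift, htr⟩
    obtain ⟨f, hf, h⟩ := ih (n + 1) (by omega) (by omega) fun τ h₁ h₂ => by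
      rcases Nat.lt_succ_iff_lt_or_eq.1 h₂ with h | h
      · exact htr τ h₁ h
      · rwa [show τ = τn from Fin.ext h]
    exact ⟨f, by omega, h⟩

end Warehouse

theorem stock_levels_of_extremePoint_mem_Sset_general {V T : ℕ} (s0 : ℝ)
    (Ls Us : Fin T → ℝ) (Lx Ux Ly Uy : Fin V → Fin T → ℝ)
    (C : Finset (CompCon V T))
    (hC : ∀ c ∈ C, ValidCompCon Lx Ux Ly Uy c)
    (p : WPoint V T)
    (hp : p ∈ Set.extremePoints ℝ (convexHull ℝ (Qset s0 Ls Us Lx Ux Ly Uy C)))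
    (t : Fin T) :
    WPoint.s p t ∈ Sset s0 Ls Us Lx Ux Ly Uy := by
  have hpQ := extremePoints_convexHull_subset hp
  by_contra hS
  obtain ⟨b, hbt, hb, ⟨ux, uy, hup⟩, htransit_le⟩ := Warehouse.exists_upShift hpQ hS
  obtain ⟨f, htf, hfT, ⟨gx, gy, hdown⟩, htransit_gt⟩ := Warehouse.exists_downShift hpQ hS
  have htransit : ∀ τ : Fin T, (b : ℕ) < τ → (τ : ℕ) < f →
      Warehouse.IsTransit s0 Ls Us Lx Ux Ly Uy p τ := fun τ h₁ h₂ =>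
    if h : (τ : ℕ) ≤ t then htransit_le τ h₁ h else htransit_gt τ (by omega) h₂
  refine Warehouse.false_of_isShiftAt hC hp (by omega) hfT hup hdown (fun τ h₁ h₂ => ?_)
    fun τ h₁ h₂ => (htransit τ h₁ h₂).sales_lt
  rcases Nat.eq_or_lt_of_le h₁ with h | h
  · rwa [show τ = b from Fin.ext h.symm]
  · exact (htransit τ h h₂).stock_mem

/-- Every coordinate `s*_t` of an extreme point of `P = conv(Q)`
belongs to the set `S`. -/
theorem stock_levels_of_extremePoint_mem_Sset {V T : ℕ} (s0 : ℝ)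
    (Ls Us : Fin T → ℝ) (Lx Ux Ly Uy : Fin V → Fin T → ℝ)
    (C : Finset (CompCon V T))
    (hLs : ∀ t, 0 ≤ Ls t) (hsLU : ∀ t, Ls t ≤ Us t)
    (hLx : ∀ v t, 0 ≤ Lx v t) (hxLU : ∀ v t, Lx v t ≤ Ux v t)
    (hLy : ∀ v t, 0 ≤ Ly v t) (hyLU : ∀ v t, Ly v t ≤ Uy v t)
    (hC : ∀ c ∈ C, ValidCompCon Lx Ux Ly Uy c)
    (p : WPoint V T)
    (hp : p ∈ Set.extremePoints ℝ (convexHull ℝ (Qset s0 Ls Us Lx Ux Ly Uy C)))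
    (t : Fin T) :
    WPoint.s p t ∈ Sset s0 Ls Us Lx Ux Ly Uy :=
  stock_levels_of_extremePoint_mem_Sset_general s0 Ls Us Lx Ux Ly Uy C hC p hp t
end

section
/- Fix a time period t ∈ {1, …, T} and two real numbers s′ and s″. The set { (x*_{·,t}, y*_{·,t}) ∈ ℝ^V × ℝ^V : (x*, y*, w*, z*, s*) is an extreme point of P with s*_{t−1} = s″ and s*_t = s′ } has cardinality at most 2V·3^{2V−1} + V²·3^{2V−2} (here s*_{t−1} denotes the fixed initial stock s₀ when t = 1). -/
/-!
At an extreme point `p` of `conv Q`, call a purchase or sale of period `t` free if it is neither `0`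
nor one of its bounds. A free variable has its indicator equal to `1` and lies strictly between its
bounds, and since a complementarity factor vanishes only at `0` or at a bound, moving free variables
never breaks a complementarity constraint. So moving two free purchases (or two free sales) in
opposite directions, or a free purchase and a free sale in the same direction while the sales do not
exhaust the stock, stays in `Q` for small steps both ways, exhibiting `p` as a midpoint. Hence at
most one purchase and at most one sale are free, and both only when the sales equal the previous
stock `s''`. Every other coordinate takes one of three values, and the free ones are recovered from
`s' = s'' - ∑ y + ∑ x` (and `∑ y = s''`), which leaves at most `2V·3^(2V-1) + V²·3^(2V-2)`
possibilities.
-/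

open scoped BigOperators

open Finset Filter Topology

theorem eq_zero_of_add_smul_mem_of_sub_smul_mem {𝕜 E : Type*} [Field 𝕜] [LinearOrder 𝕜]
    [IsStrictOrderedRing 𝕜] [AddCommGroup E] [Module 𝕜 E] {A : Set E} {p q : E} {ε : 𝕜}
    (hp : p ∈ A.extremePoints 𝕜) (hε : ε ≠ 0) (h₁ : p + ε • q ∈ A) (h₂ : p - ε • q ∈ A) :
    q = 0 := by
  have hseg : p ∈ openSegment 𝕜 (p + ε • q) (p - ε • q) :=
    ⟨1 / 2, 1 / 2, by norm_num, by norm_num, by norm_num, by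
      rw [← smul_add, add_add_sub_cancel, ← two_smul 𝕜 p, smul_smul]; norm_num⟩
  simpa [hε] using hp.2 h₁ h₂ hseg

theorem apply_eq_of_sum_mul_eq {ι R : Type*} [Fintype ι] [CommRing R] [IsDomain R]
    {w f g : ι → R} {i : ι} (hw : w i ≠ 0) (h : ∀ k ≠ i, w k * f k = w k * g k)
    (hs : ∑ k, w k * f k = ∑ k, w k * g k) : f i = g i := by
  classical
  rw [← add_sum_erase _ _ (mem_univ i), ← add_sum_erase _ _ (mem_univ i),
    sum_congr rfl fun k hk => h k (ne_of_mem_erase hk)] at hs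
  exact mul_left_cancel₀ hw (add_right_cancel hs)

theorem ncard_le_of_forall_exists_code {γ κ : Type*} [Finite κ] {s : Set γ} (R : γ → κ → Prop)
    (hex : ∀ c ∈ s, ∃ k, R c k) (huniq : ∀ c ∈ s, ∀ c' ∈ s, ∀ k, R c k → R c' k → c = c') :
    s.ncard ≤ Nat.card κ := by
  choose f hf using hex
  rw [← Nat.card_coe_set_eq]
  refine Nat.card_le_card_of_injective (fun c : s => f c c.2) fun c c' h => ?_
  have hc' : R c' (f c c.2) := (show f c c.2 = f c' c'.2 from h) ▸ hf c' c'.2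
  exact Subtype.ext (huniq c c.2 c' c'.2 _ (hf c c.2) hc')

theorem single_sub_single_ne_zero_imp {ι : Type*} [DecidableEq ι] {P : ι → Prop} {a b : ι}
    (ha : P a) (hb : P b) (v : ι) (hv : (Pi.single a 1 - Pi.single b 1 : ι → ℝ) v ≠ 0) :
    P v := by
  by_cases hva : v = a
  · exact hva ▸ ha
  by_cases hvb : v = b
  · exact hvb ▸ hb
  simp [hva, hvb] at hv

theorem single_ne_zero_imp {ι : Type*} [DecidableEq ι] {P : ι → Prop} {a : ι} (ha : P a)
    (v : ι) (hv : (Pi.single a 1 : ι → ℝ) v ≠ 0) : P v := by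
  by_cases hva : v = a
  · exact hva ▸ ha
  simp [hva] at hv

namespace Warehouse

def IsFree (lo hi a : ℝ) : Prop := a ∉ Set.range ![0, lo, hi]

theorem IsFree.ne_zero {lo hi a : ℝ} (h : IsFree lo hi a) : a ≠ 0 := fun h' => h ⟨0, h'.symm⟩

theorem not_isFree_of_eq {lo hi a : ℝ} (h : a = 0 ∨ a = lo ∨ a = hi) : ¬IsFree lo hi a := by
  rcases h with h | h | h
  exacts [not_not.2 ⟨0, h.symm⟩, not_not.2 ⟨1, h.symm⟩, not_not.2 ⟨2, h.symm⟩]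

theorem IsFree.eq_one_and_lt_and_lt {lo hi a ind : ℝ} (h : IsFree lo hi a)
    (hind : ind = 0 ∨ ind = 1) (hbd : lo * ind ≤ a ∧ a ≤ hi * ind) : ind = 1 ∧ lo < a ∧ a < hi := by
  obtain rfl : ind = 1 := hind.resolve_left fun h0 => h.ne_zero <| by
    simp only [h0, mul_zero] at hbd; linarith [hbd.1, hbd.2]
  simp only [mul_one] at hbd
  exact ⟨rfl, hbd.1.lt_of_ne fun h' => h ⟨1, h'⟩, hbd.2.lt_of_ne fun h' => h ⟨2, h'.symm⟩⟩

theorem add_mem_indicator_bounds {lo hi a δ ind : ℝ} (hind : ind = 0 ∨ ind = 1)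
    (hbd : lo * ind ≤ a ∧ a ≤ hi * ind) (hδ : δ ≠ 0 → IsFree lo hi a ∧ lo ≤ a + δ ∧ a + δ ≤ hi) :
    lo * ind ≤ a + δ ∧ a + δ ≤ hi * ind := by
  by_cases h0 : δ = 0
  · simpa [h0] using hbd
  · obtain ⟨hfree, hδ⟩ := hδ h0
    rw [(hfree.eq_one_and_lt_and_lt hind hbd).1, mul_one, mul_one]
    exact hδ

theorem eventually_add_mul_mem_bounds {lo hi a ind : ℝ} (δ : ℝ)
    (hind : ind = 0 ∨ ind = 1) (hbd : lo * ind ≤ a ∧ a ≤ hi * ind)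
    (hfree : δ ≠ 0 → IsFree lo hi a) :
    ∀ᶠ σ in 𝓝 (0 : ℝ), σ * δ ≠ 0 → IsFree lo hi a ∧ lo ≤ a + σ * δ ∧ a + σ * δ ≤ hi := by
  by_cases hδ : δ = 0
  · exact Eventually.of_forall fun σ h => (h (by simp [hδ])).elim
  obtain ⟨-, hlo, hhi⟩ := (hfree hδ).eq_one_and_lt_and_lt hind hbd
  have hcont : ContinuousAt (fun σ : ℝ => a + σ * δ) 0 := by fun_prop
  filter_upwards [continuousAt_const.eventually_lt hcont (by simpa using hlo),
    hcont.eventually_lt continuousAt_const (by simpa using hhi)]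
    with σ h₁ h₂ using fun _ => ⟨hfree hδ, h₁.le, h₂.le⟩

section Slices

variable {α β : Type*}

/-- A pivot coordinate, or a pair of a free purchase and a free sale, together with a tag
recording for each remaining coordinate whether it is `0`, at its lower or at its upper bound. -/
abbrev SliceCode (α β : Type*) :=
  (Σ i : α ⊕ β, {k // k ≠ i} → Fin 3) ⊕
    (Σ ab : α × β, {k : α ⊕ β // k ≠ .inl ab.1 ∧ k ≠ .inr ab.2} → Fin 3)

def SliceCode.Decodes (lo hi c : α ⊕ β → ℝ) : SliceCode α β → Prop
  | .inl ⟨i, τ⟩ => ∀ k : {k // k ≠ i}, c k = ![0, lo k, hi k] (τ k)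
  | .inr ⟨(a, b), τ⟩ => IsFree (lo (.inl a)) (hi (.inl a)) (c (.inl a)) ∧
      IsFree (lo (.inr b)) (hi (.inr b)) (c (.inr b)) ∧
      ∀ k : {k : α ⊕ β // k ≠ .inl a ∧ k ≠ .inr b}, c k = ![0, lo k, hi k] (τ k)

variable {lo hi : α ⊕ β → ℝ} {prev net : ℝ}

theorem exists_tags {P : α ⊕ β → Prop} {c : α ⊕ β → ℝ}
    (h : ∀ k, P k → ¬IsFree (lo k) (hi k) (c k)) :
    ∃ τ : {k // P k} → Fin 3, ∀ k : {k // P k}, c k = ![0, lo k, hi k] (τ k) := by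
  choose τ hτ using fun k : {k // P k} => not_not.1 (h k k.2)
  exact ⟨τ, fun k => (hτ k).symm⟩

variable [Fintype α] [Fintype β]

/-- `c` lists the purchases (`inl`) and sales (`inr`) of one period; `prev` is the stock before
the period and `net` its change. -/
structure IsVertexSlice (lo hi : α ⊕ β → ℝ) (prev net : ℝ) (c : α ⊕ β → ℝ) : Prop where
  inl_eq_of_isFree : ∀ a a', IsFree (lo (.inl a)) (hi (.inl a)) (c (.inl a)) →
    IsFree (lo (.inl a')) (hi (.inl a')) (c (.inl a')) → a = a'
  inr_eq_of_isFree : ∀ b b', IsFree (lo (.inr b)) (hi (.inr b)) (c (.inr b)) →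
    IsFree (lo (.inr b')) (hi (.inr b')) (c (.inr b')) → b = b'
  sum_inr_eq : ∀ a b, IsFree (lo (.inl a)) (hi (.inl a)) (c (.inl a)) →
    IsFree (lo (.inr b)) (hi (.inr b)) (c (.inr b)) → ∑ b, c (.inr b) = prev
  sum_inl_sub_sum_inr : ∑ a, c (.inl a) - ∑ b, c (.inr b) = net

theorem IsVertexSlice.exists_decodes [Nonempty α] {c : α ⊕ β → ℝ}
    (hc : IsVertexSlice lo hi prev net c) : ∃ κ, SliceCode.Decodes lo hi c κ := by
  by_cases hab : ∃ a b, IsFree (lo (.inl a)) (hi (.inl a)) (c (.inl a)) ∧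
      IsFree (lo (.inr b)) (hi (.inr b)) (c (.inr b))
  · obtain ⟨a, b, ha, hb⟩ := hab
    obtain ⟨τ, hτ⟩ := exists_tags (P := fun k => k ≠ .inl a ∧ k ≠ .inr b) (c := c) <| by
      rintro (a' | b') hk hfree
      · exact hk.1 (congrArg _ (hc.inl_eq_of_isFree a' a hfree ha))
      · exact hk.2 (congrArg _ (hc.inr_eq_of_isFree b' b hfree hb))
    exact ⟨.inr ⟨(a, b), τ⟩, ha, hb, hτ⟩
  · obtain ⟨i, hoff⟩ : ∃ i, ∀ k, k ≠ i → ¬IsFree (lo k) (hi k) (c k) := by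
      by_cases hfree : ∃ i, IsFree (lo i) (hi i) (c i)
      · obtain ⟨i, hi⟩ := hfree
        refine ⟨i, fun k hk hk' => hk ?_⟩
        rcases i with a | b <;> rcases k with a' | b'
        · exact congrArg _ (hc.inl_eq_of_isFree a' a hk' hi)
        · exact (hab ⟨a, b', hi, hk'⟩).elim
        · exact (hab ⟨a', b, hk', hi⟩).elim
        · exact congrArg _ (hc.inr_eq_of_isFree b' b hk' hi)
      · exact ⟨.inl (Classical.arbitrary α), fun k _ hk => hfree ⟨k, hk⟩⟩
    obtain ⟨τ, hτ⟩ := exists_tags (P := fun k => k ≠ i) hoff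
    exact ⟨.inl ⟨i, τ⟩, hτ⟩

theorem IsVertexSlice.eq_of_forall_ne_eq {c c' : α ⊕ β → ℝ} (hc : IsVertexSlice lo hi prev net c)
    (hc' : IsVertexSlice lo hi prev net c') {i : α ⊕ β} (hoff : ∀ k ≠ i, c k = c' k) :
    c = c' := by
  have balance (d : α ⊕ β → ℝ) : ∑ k, Sum.elim (fun _ => 1) (fun _ => -1) k * d k =
      ∑ a, d (.inl a) - ∑ b, d (.inr b) := by
    simp [Fintype.sum_sum_type, sub_eq_add_neg]
  funext k
  by_cases hk : k = i
  · subst hk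
    refine apply_eq_of_sum_mul_eq (w := Sum.elim (fun _ => 1) (fun _ => -1))
      (by rcases k <;> simp) (fun j hj => by rw [hoff j hj]) ?_
    rw [balance, balance, hc.sum_inl_sub_sum_inr, hc'.sum_inl_sub_sum_inr]
  · exact hoff k hk

theorem IsVertexSlice.eq_of_decodes {c c' : α ⊕ β → ℝ} (hc : IsVertexSlice lo hi prev net c)
    (hc' : IsVertexSlice lo hi prev net c') {κ : SliceCode α β}
    (h : SliceCode.Decodes lo hi c κ) (h' : SliceCode.Decodes lo hi c' κ) : c = c' := by
  rcases κ with ⟨i, τ⟩ | ⟨⟨a, b⟩, τ⟩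
  · exact hc.eq_of_forall_ne_eq hc' fun k hk => (h ⟨k, hk⟩).trans (h' ⟨k, hk⟩).symm
  obtain ⟨ha, hb, h⟩ := h
  obtain ⟨ha', hb', h'⟩ := h'
  have hoff : ∀ k, k ≠ .inl a → k ≠ .inr b → c k = c' k := fun k hk₁ hk₂ =>
    (h ⟨k, hk₁, hk₂⟩).trans (h' ⟨k, hk₁, hk₂⟩).symm
  have hb_eq : c (.inr b) = c' (.inr b) := by
    refine apply_eq_of_sum_mul_eq (w := Sum.elim (fun _ => 0) (fun _ => 1)) (by simp)
      (fun k hk => ?_) ?_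
    · by_cases hka : k = .inl a
      · simp [hka]
      · rw [hoff k hka hk]
    · simp [Fintype.sum_sum_type, hc.sum_inr_eq a b ha hb, hc'.sum_inr_eq a b ha' hb']
  refine hc.eq_of_forall_ne_eq hc' (i := .inl a) fun k hk => ?_
  by_cases hkb : k = .inr b
  · rw [hkb, hb_eq]
  · exact hoff k hk hkb

theorem card_sliceCode :
    Nat.card (SliceCode α β) =
      (Fintype.card α + Fintype.card β) * 3 ^ (Fintype.card α + Fintype.card β - 1) +
        Fintype.card α * Fintype.card β * 3 ^ (Fintype.card α + Fintype.card β - 2) := by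
  classical
  rw [Nat.card_eq_fintype_card, Fintype.card_sum, Fintype.card_sigma, Fintype.card_sigma]
  have h₁ (i : α ⊕ β) : Fintype.card {k // k ≠ i} = Fintype.card α + Fintype.card β - 1 := by
    rw [Fintype.card_subtype_compl, Fintype.card_subtype_eq, Fintype.card_sum]
  have h₂ (a : α) (b : β) : Fintype.card {k : α ⊕ β // k ≠ .inl a ∧ k ≠ .inr b} =
      Fintype.card α + Fintype.card β - 2 := by
    rw [Fintype.card_subtype, Finset.filter_and, Finset.filter_ne', Finset.filter_ne',
      Finset.erase_inter, Finset.inter_erase, Finset.inter_self,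
      Finset.card_erase_of_mem (by simp), Finset.card_erase_of_mem (by simp), Finset.card_univ,
      Fintype.card_sum, Nat.sub_sub]
  simp only [Fintype.card_fun, Fintype.card_fin, h₁, h₂, Finset.sum_const, Finset.card_univ,
    Fintype.card_sum, Fintype.card_prod, smul_eq_mul]

theorem ncard_le_of_isVertexSlice [Nonempty α] {S : Set (α ⊕ β → ℝ)}
    (hS : ∀ c ∈ S, IsVertexSlice lo hi prev net c) : S.ncard ≤ Nat.card (SliceCode α β) :=
  ncard_le_of_forall_exists_code (SliceCode.Decodes lo hi)
    (fun c hc => (hS c hc).exists_decodes)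
    (fun c hc c' hc' _ h h' => (hS c hc).eq_of_decodes (hS c' hc') h h')

end Slices

variable {V T : ℕ}

def sliceDir (t : Fin T) (d e : Fin V → ℝ) : WPoint V T :=
  (fun v t' => if t' = t then d v else 0, fun v t' => if t' = t then e v else 0, 0, 0, 0)

section SliceDir

variable (p : WPoint V T) (t : Fin T) (d e : Fin V → ℝ)

@[simp] theorem x_add_sliceDir (v : Fin V) (t' : Fin T) :
    (p + sliceDir t d e).x v t' = p.x v t' + if t' = t then d v else 0 := rfl

@[simp] theorem y_add_sliceDir (v : Fin V) (t' : Fin T) :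
    (p + sliceDir t d e).y v t' = p.y v t' + if t' = t then e v else 0 := rfl

@[simp] theorem w_add_sliceDir : (p + sliceDir t d e).w = p.w := add_zero _

@[simp] theorem z_add_sliceDir : (p + sliceDir t d e).z = p.z := add_zero _

@[simp] theorem s_add_sliceDir : (p + sliceDir t d e).s = p.s := add_zero _

theorem smul_sliceDir (σ : ℝ) : σ • sliceDir t d e = sliceDir t (σ • d) (σ • e) := by
  simp only [sliceDir, Prod.smul_mk, smul_zero]
  congr <;> ext v t' <;> split_ifs <;> simp [*]

theorem eq_zero_of_sliceDir_eq_zero (h : sliceDir t d e = 0) : d = 0 ∧ e = 0 :=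
  ⟨funext fun v => by simpa [sliceDir] using congrFun (congrFun (congrArg Prod.fst h) v) t,
    funext fun v => by simpa [sliceDir] using congrFun (congrFun (congrArg (·.2.1) h) v) t⟩

end SliceDir

section Perturbation

variable {s0 : ℝ} {Ls Us : Fin T → ℝ} {Lx Ux Ly Uy : Fin V → Fin T → ℝ}
  {C : Finset (CompCon V T)} {p : WPoint V T} {t : Fin T} {d e : Fin V → ℝ}

theorem val_add_sliceDir_of_not_isFree
    (hd : ∀ v, d v ≠ 0 → IsFree (Lx v t) (Ux v t) (p.x v t))
    (he : ∀ v, e v ≠ 0 → IsFree (Ly v t) (Uy v t) (p.y v t)) {u : WVar V T}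
    (hu : ¬IsFree (u.lb Lx Ly) (u.ub Ux Uy) (u.val p.x p.y)) :
    u.val (p + sliceDir t d e).x (p + sliceDir t d e).y = u.val p.x p.y := by
  obtain ⟨_ | _, v, t'⟩ := u <;> simp only [WVar.val, WVar.lb, WVar.ub] at hu ⊢ <;>
    simp only [x_add_sliceDir, y_add_sliceDir, Bool.false_eq_true, if_true, if_false,
      add_eq_left, ite_eq_right_iff] <;> rintro rfl
  · exact not_not.1 (mt (he v) hu)
  · exact not_not.1 (mt (hd v) hu)

theorem add_sliceDir_mem_Qset (hp : p ∈ Qset s0 Ls Us Lx Ux Ly Uy C)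
    (hC : ∀ c ∈ C, ValidCompCon Lx Ux Ly Uy c) (hde : ∑ v, d v = ∑ v, e v)
    (hd : ∀ v, d v ≠ 0 →
      IsFree (Lx v t) (Ux v t) (p.x v t) ∧ Lx v t ≤ p.x v t + d v ∧ p.x v t + d v ≤ Ux v t)
    (he : ∀ v, e v ≠ 0 →
      IsFree (Ly v t) (Uy v t) (p.y v t) ∧ Ly v t ≤ p.y v t + e v ∧ p.y v t + e v ≤ Uy v t)
    (hsales : ∑ v, p.y v t + ∑ v, e v ≤ prevStock s0 p.s t) :
    p + sliceDir t d e ∈ Qset s0 Ls Us Lx Ux Ly Uy C := by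
  obtain ⟨hbal, hbd, hsold, hcomp, hy, hx, hw, hz⟩ := hp
  refine ⟨fun t' => ?_, by simpa using hbd, fun t' => ?_, fun c hc => ?_, fun v t' => ?_,
    fun v t' => ?_, by simpa using hw, by simpa using hz⟩
  · simp only [s_add_sliceDir, x_add_sliceDir, y_add_sliceDir, sum_add_distrib]
    split_ifs with ht
    · rw [hde]; linarith [hbal t']
    · simpa using hbal t'
  · simp only [s_add_sliceDir, y_add_sliceDir, sum_add_distrib]
    split_ifs with ht
    · exact ht ▸ hsales
    · simpa using hsold t'
  · obtain ⟨-, hB₁, hB₂⟩ := hC c hc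
    have hfix (u : WVar V T) := val_add_sliceDir_of_not_isFree (u := u) (fun v hv => (hd v hv).1)
      (fun v hv => (he v hv).1)
    rcases mul_eq_zero.1 (hcomp c hc) with h | h <;> rw [sub_eq_zero] at h
    · rw [hfix c.V1 (not_isFree_of_eq (h ▸ hB₁)), h, sub_self, zero_mul]
    · rw [hfix c.V2 (not_isFree_of_eq (h ▸ hB₂)), h, sub_self, mul_zero]
  · simp only [y_add_sliceDir, z_add_sliceDir]
    refine add_mem_indicator_bounds (hz v t') (hy v t') ?_
    split_ifs with ht
    · exact ht ▸ he v
    · exact fun h => (h rfl).elim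
  · simp only [x_add_sliceDir, w_add_sliceDir]
    refine add_mem_indicator_bounds (hw v t') (hx v t') ?_
    split_ifs with ht
    · exact ht ▸ hd v
    · exact fun h => (h rfl).elim

theorem perturbation_eq_zero_of_mem_extremePoints
    (hext : p ∈ (convexHull ℝ (Qset s0 Ls Us Lx Ux Ly Uy C)).extremePoints ℝ)
    (hC : ∀ c ∈ C, ValidCompCon Lx Ux Ly Uy c) (hde : ∑ v, d v = ∑ v, e v)
    (hd : ∀ v, d v ≠ 0 → IsFree (Lx v t) (Ux v t) (p.x v t))
    (he : ∀ v, e v ≠ 0 → IsFree (Ly v t) (Uy v t) (p.y v t))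
    (hslack : ∑ v, e v = 0 ∨ ∑ v, p.y v t < prevStock s0 p.s t) :
    d = 0 ∧ e = 0 := by
  have hp : p ∈ Qset s0 Ls Us Lx Ux Ly Uy C := extremePoints_convexHull_subset hext
  obtain ⟨-, -, hsold, -, hy, hx, hw, hz⟩ := id hp
  have hev : ∀ᶠ σ in 𝓝 (0 : ℝ), p + σ • sliceDir t d e ∈ Qset s0 Ls Us Lx Ux Ly Uy C := by
    have hxσ := eventually_all.2 fun v =>
      eventually_add_mul_mem_bounds (d v) (hw v t) (hx v t) (hd v)
    have hyσ := eventually_all.2 fun v =>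
      eventually_add_mul_mem_bounds (e v) (hz v t) (hy v t) (he v)
    have hsσ : ∀ᶠ σ in 𝓝 (0 : ℝ), ∑ v, p.y v t + σ * ∑ v, e v ≤ prevStock s0 p.s t := by
      rcases hslack with h0 | hlt
      · simp [h0, hsold t]
      · exact (ContinuousAt.eventually_lt (by fun_prop) continuousAt_const (by simpa)).mono
          fun _ h => h.le
    filter_upwards [hxσ, hyσ, hsσ] with σ hσx hσy hσs
    rw [smul_sliceDir]
    refine add_sliceDir_mem_Qset hp hC ?_ hσx hσy ?_
    · simp [← mul_sum, hde]
    · simpa [mul_sum] using hσs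
  obtain ⟨ε, hε, hball⟩ := Metric.eventually_nhds_iff.1 hev
  have hmem : ∀ σ : ℝ, |σ| < ε →
      p + σ • sliceDir t d e ∈ convexHull ℝ (Qset s0 Ls Us Lx Ux Ly Uy C) :=
    fun σ hσ => subset_convexHull ℝ _ (hball (by simpa using hσ))
  have hε' : |ε / 2| < ε := by rw [abs_of_pos (half_pos hε)]; exact half_lt_self hε
  refine eq_zero_of_sliceDir_eq_zero _ _ _ <|
    eq_zero_of_add_smul_mem_of_sub_smul_mem hext (half_pos hε).ne' (hmem _ hε') ?_
  rw [sub_eq_add_neg, ← neg_smul]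
  exact hmem _ (by rwa [abs_neg])

end Perturbation

section ExtremePoints

variable {s0 : ℝ} {Ls Us : Fin T → ℝ} {Lx Ux Ly Uy : Fin V → Fin T → ℝ}
  {C : Finset (CompCon V T)} {p : WPoint V T} {t : Fin T}
  (hext : p ∈ (convexHull ℝ (Qset s0 Ls Us Lx Ux Ly Uy C)).extremePoints ℝ)
  (hC : ∀ c ∈ C, ValidCompCon Lx Ux Ly Uy c)
include hext hC

theorem eq_of_isFree_x {v₁ v₂ : Fin V} (h₁ : IsFree (Lx v₁ t) (Ux v₁ t) (p.x v₁ t))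
    (h₂ : IsFree (Lx v₂ t) (Ux v₂ t) (p.x v₂ t)) : v₁ = v₂ := by
  by_contra hne
  have := perturbation_eq_zero_of_mem_extremePoints (e := 0) hext hC (by simp)
    (single_sub_single_ne_zero_imp h₁ h₂) (by simp) (.inl (by simp))
  simpa [hne] using congrFun this.1 v₁

theorem eq_of_isFree_y {v₁ v₂ : Fin V} (h₁ : IsFree (Ly v₁ t) (Uy v₁ t) (p.y v₁ t))
    (h₂ : IsFree (Ly v₂ t) (Uy v₂ t) (p.y v₂ t)) : v₁ = v₂ := by
  by_contra hne
  have := perturbation_eq_zero_of_mem_extremePoints (d := 0) hext hC (by simp)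
    (by simp) (single_sub_single_ne_zero_imp h₁ h₂) (.inl (by simp))
  simpa [hne] using congrFun this.2 v₁

theorem sum_y_eq_prevStock_of_isFree {v₁ v₂ : Fin V} (h₁ : IsFree (Lx v₁ t) (Ux v₁ t) (p.x v₁ t))
    (h₂ : IsFree (Ly v₂ t) (Uy v₂ t) (p.y v₂ t)) : ∑ v, p.y v t = prevStock s0 p.s t := by
  by_contra hne
  have hslack := ((extremePoints_convexHull_subset hext).2.2.1 t).lt_of_ne hne
  have := perturbation_eq_zero_of_mem_extremePoints hext hC (by simp)
    (single_ne_zero_imp h₁) (single_ne_zero_imp h₂) (.inr hslack)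
  simpa using congrFun this.1 v₁

theorem isVertexSlice_of_mem_extremePoints :
    IsVertexSlice (Sum.elim (Lx · t) (Ly · t)) (Sum.elim (Ux · t) (Uy · t))
      (prevStock s0 p.s t) (p.s t - prevStock s0 p.s t) (Sum.elim (p.x · t) (p.y · t)) where
  inl_eq_of_isFree _ _ := eq_of_isFree_x hext hC
  inr_eq_of_isFree _ _ := eq_of_isFree_y hext hC
  sum_inr_eq _ _ := sum_y_eq_prevStock_of_isFree hext hC
  sum_inl_sub_sum_inr := by
    have := (extremePoints_convexHull_subset hext).1 t
    simp only [Sum.elim_inl, Sum.elim_inr]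
    linarith

end ExtremePoints

end Warehouse

theorem card_extreme_purchase_sales_le_general {V T : ℕ} (hV : 0 < V) (s0 : ℝ)
    (Ls Us : Fin T → ℝ) (Lx Ux Ly Uy : Fin V → Fin T → ℝ)
    (C : Finset (CompCon V T))
    (hC : ∀ c ∈ C, ValidCompCon Lx Ux Ly Uy c)
    (t : Fin T) (s' s'' : ℝ) :
    ({ xy : (Fin V → ℝ) × (Fin V → ℝ) |
        ∃ p ∈ Set.extremePoints ℝ (convexHull ℝ (Qset s0 Ls Us Lx Ux Ly Uy C)),
          WPoint.s p t = s' ∧ prevStock s0 (WPoint.s p) t = s'' ∧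
          xy = (fun v => WPoint.x p v t, fun v => WPoint.y p v t) }).ncard ≤
      2 * V * 3 ^ (2 * V - 1) + V ^ 2 * 3 ^ (2 * V - 2) := by
  have : Nonempty (Fin V) := ⟨⟨0, hV⟩⟩
  have hinj := (Equiv.sumArrowEquivProdArrow (Fin V) (Fin V) ℝ).symm.injective
  rw [← Set.ncard_image_of_injective _ hinj]
  calc _ ≤ Nat.card (Warehouse.SliceCode (Fin V) (Fin V)) := by
        refine Warehouse.ncard_le_of_isVertexSlice (lo := Sum.elim (Lx · t) (Ly · t))
          (hi := Sum.elim (Ux · t) (Uy · t)) (prev := s'') (net := s' - s'') ?_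
        rintro _ ⟨_, ⟨p, hext, rfl, rfl, rfl⟩, rfl⟩
        exact Warehouse.isVertexSlice_of_mem_extremePoints hext hC
    _ = _ := by rw [Warehouse.card_sliceCode]; simp [two_mul, sq]

/-- For a fixed time period `t` and fixed stock levels `s''` (before) and
`s'` (after), the set of vectors `(x*_{·,t}, y*_{·,t})` arising from extreme points of
`P = conv(Q)` has cardinality at most `2V·3^(2V-1) + V²·3^(2V-2)`. -/
theorem card_extreme_purchase_sales_le {V T : ℕ} (hV : 0 < V) (s0 : ℝ)
    (Ls Us : Fin T → ℝ) (Lx Ux Ly Uy : Fin V → Fin T → ℝ)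
    (C : Finset (CompCon V T))
    (hLs : ∀ t, 0 ≤ Ls t) (hsLU : ∀ t, Ls t ≤ Us t)
    (hLx : ∀ v t, 0 ≤ Lx v t) (hxLU : ∀ v t, Lx v t ≤ Ux v t)
    (hLy : ∀ v t, 0 ≤ Ly v t) (hyLU : ∀ v t, Ly v t ≤ Uy v t)
    (hC : ∀ c ∈ C, ValidCompCon Lx Ux Ly Uy c)
    (t : Fin T) (s' s'' : ℝ) :
    ({ xy : (Fin V → ℝ) × (Fin V → ℝ) |
        ∃ p ∈ Set.extremePoints ℝ (convexHull ℝ (Qset s0 Ls Us Lx Ux Ly Uy C)),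
          WPoint.s p t = s' ∧ prevStock s0 (WPoint.s p) t = s'' ∧
          xy = (fun v => WPoint.x p v t, fun v => WPoint.y p v t) }).ncard ≤
      2 * V * 3 ^ (2 * V - 1) + V ^ 2 * 3 ^ (2 * V - 2) :=
  card_extreme_purchase_sales_le_general hV s0 Ls Us Lx Ux Ly Uy C hC t s' s''
end

section
/- Let (x*, y*, w*, z*, s*) be an extreme point of P = conv(Q) and let t ∈ {1, …, T} be a time period with Σ_{v∈𝒱} y*_{v,t} < s*_{t−1} (where s*_0 = s₀). Then among the 2V coordinates {x*_{v,t} : v ∈ 𝒱} ∪ {y*_{v,t} : v ∈ 𝒱}, at most one fails to belong to the three-element set consisting of 0, its lower bound, and its upper bound; that is, there is at most one coordinate with x*_{v,t} ∉ {0, L^x_{v,t}, U^x_{v,t}} or y*_{v,t} ∉ {0, L^y_{v,t}, U^y_{v,t}}. -/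
open scoped BigOperators

/-! If two distinct coordinates `u₁ ≠ u₂` of period `t` are fractional at `p`, move them together
along `pairMove u₁ u₂`: `u₁` changes by `a` and `u₂` compensates so that the net inflow
`∑ x - ∑ y` of period `t` is unchanged, hence so are all stock levels. For `|a|` small both
perturbed points stay in `Q`: fractional coordinates have indicator `1` and lie strictly between
their bounds, the slack in `∑ y < s_{t-1}` absorbs the change in sales, and each complementarity
constraint is carried by a coordinate at `0` or at a bound, which does not move. So `p` is the
midpoint of two other points of `Q`, contradicting extremality. -/

open Filter Topology

theorem eq_zero_of_eventually_add_smul_mem_extremePoints {E : Type*} [AddCommGroup E]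
    [Module ℝ E] {A : Set E} {p d : E} (hp : p ∈ A.extremePoints ℝ)
    (h : ∀ᶠ a in 𝓝 (0 : ℝ), p + a • d ∈ A) : d = 0 := by
  obtain ⟨ε, hε, hball⟩ := Metric.eventually_nhds_iff.1 h
  have hmem : ∀ a : ℝ, |a| < ε → p + a • d ∈ A := fun a ha => hball (by simpa using ha)
  have hplus := hmem (ε / 2) (by rw [abs_of_pos (half_pos hε)]; linarith)
  have hminus := hmem (-(ε / 2)) (by rw [abs_neg, abs_of_pos (half_pos hε)]; linarith)
  rw [neg_smul, ← sub_eq_add_neg] at hminus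
  have hfix : p + (ε / 2) • d = p := hp.2 hplus hminus (mem_openSegment_add_sub p _)
  simpa [(half_pos hε).ne'] using hfix

theorem tendsto_add_mul_nhds_zero (r b : ℝ) :
    Tendsto (fun a : ℝ => r + a * b) (𝓝 0) (𝓝 r) := by
  simpa using ((tendsto_id (x := 𝓝 (0 : ℝ))).mul_const b).const_add r

theorem eventually_add_mul_le {r R b : ℝ} (hle : r ≤ R) (hlt : b ≠ 0 → r < R) :
    ∀ᶠ a in 𝓝 (0 : ℝ), r + a * b ≤ R := by
  by_cases hb : b = 0
  · simpa [hb] using hle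
  exact ((tendsto_add_mul_nhds_zero r b).eventually_lt_const (hlt hb)).mono fun _ => le_of_lt

theorem eventually_mem_Icc_add_mul {L r U : ℝ} (hL : L < r) (hU : r < U) (b : ℝ) :
    ∀ᶠ a in 𝓝 (0 : ℝ), r + a * b ∈ Set.Icc L U :=
  (tendsto_add_mul_nhds_zero r b).eventually (Icc_mem_nhds hL hU)

theorem eq_one_of_bounds_mul_indicator {L U w r : ℝ} (h : L * w ≤ r ∧ r ≤ U * w)
    (hw : w = 0 ∨ w = 1) (hr : r ≠ 0) : w = 1 :=
  hw.resolve_left fun h0 => hr (by subst h0; simp only [mul_zero] at h; linarith)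

theorem bounds_mul_indicator_add {L U w r d : ℝ} (h : L * w ≤ r ∧ r ≤ U * w)
    (hw : w = 0 ∨ w = 1) (hd : d ≠ 0 → r ≠ 0 ∧ r + d ∈ Set.Icc L U) :
    L * w ≤ r + d ∧ r + d ≤ U * w := by
  by_cases hd0 : d = 0
  · simpa [hd0] using h
  obtain ⟨hr, hlo, hhi⟩ := hd hd0
  rw [eq_one_of_bounds_mul_indicator h hw hr, mul_one, mul_one]
  exact ⟨hlo, hhi⟩

section Moves

variable {V T : ℕ}

def WVar.IsFractional (Lx Ux Ly Uy x y : Fin V → Fin T → ℝ) (u : WVar V T) : Prop :=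
  u.val x y ∉ ({0, u.lb Lx Ly, u.ub Ux Uy} : Set ℝ)

def ofMove (δ : WVar V T → ℝ) : WPoint V T :=
  (fun v t => δ ⟨true, v, t⟩, fun v t => δ ⟨false, v, t⟩, 0, 0, 0)

section ofMove

variable (p : WPoint V T) (δ : WVar V T → ℝ)

theorem WVar.val_ofMove (u : WVar V T) : u.val (ofMove δ).x (ofMove δ).y = δ u := by
  obtain ⟨_ | _, v, t⟩ := u <;> rfl

theorem WVar.val_add_ofMove (u : WVar V T) :
    u.val (p + ofMove δ).x (p + ofMove δ).y = u.val p.x p.y + δ u := by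
  obtain ⟨_ | _, v, t⟩ := u <;> rfl

theorem WPoint.w_add_ofMove : (p + ofMove δ).w = p.w := add_zero p.w

theorem WPoint.z_add_ofMove : (p + ofMove δ).z = p.z := add_zero p.z

theorem WPoint.s_add_ofMove : (p + ofMove δ).s = p.s := add_zero p.s

theorem WPoint.sum_x_add_ofMove (t : Fin T) :
    ∑ v, (p + ofMove δ).x v t = ∑ v, p.x v t + ∑ v, δ ⟨true, v, t⟩ :=
  Finset.sum_add_distrib

theorem WPoint.sum_y_add_ofMove (t : Fin T) :
    ∑ v, (p + ofMove δ).y v t = ∑ v, p.y v t + ∑ v, δ ⟨false, v, t⟩ :=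
  Finset.sum_add_distrib

theorem ofMove_smul (a : ℝ) : ofMove (a • δ) = a • ofMove δ := by
  ext <;> simp [ofMove]

theorem ofMove_ne_zero {u : WVar V T} (hu : δ u ≠ 0) : ofMove δ ≠ 0 := by
  intro h
  apply hu
  rw [← WVar.val_ofMove δ u, h]
  obtain ⟨_ | _, v, t⟩ := u <;> rfl

end ofMove

section Qset

variable {s0 : ℝ} {Ls Us : Fin T → ℝ} {Lx Ux Ly Uy : Fin V → Fin T → ℝ}
  {C : Finset (CompCon V T)} {p : WPoint V T}

namespace WVar

theorem indicator_of_mem_Qset (hp : p ∈ Qset s0 Ls Us Lx Ux Ly Uy C) (u : WVar V T) :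
    u.val p.w p.z = 0 ∨ u.val p.w p.z = 1 := by
  obtain ⟨_ | _, v, t⟩ := u
  exacts [hp.2.2.2.2.2.2.2 v t, hp.2.2.2.2.2.2.1 v t]

theorem bounds_of_mem_Qset (hp : p ∈ Qset s0 Ls Us Lx Ux Ly Uy C) (u : WVar V T) :
    u.lb Lx Ly * u.val p.w p.z ≤ u.val p.x p.y ∧
      u.val p.x p.y ≤ u.ub Ux Uy * u.val p.w p.z := by
  obtain ⟨_ | _, v, t⟩ := u
  exacts [hp.2.2.2.2.1 v t, hp.2.2.2.2.2.1 v t]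

theorem IsFractional.mem_Ioo (hp : p ∈ Qset s0 Ls Us Lx Ux Ly Uy C) {u : WVar V T}
    (hu : u.IsFractional Lx Ux Ly Uy p.x p.y) :
    u.val p.x p.y ∈ Set.Ioo (u.lb Lx Ly) (u.ub Ux Uy) := by
  simp only [IsFractional, Set.mem_insert_iff, Set.mem_singleton_iff, not_or] at hu
  obtain ⟨h0, hlb, hub⟩ := hu
  have hbd := bounds_of_mem_Qset hp u
  rw [eq_one_of_bounds_mul_indicator hbd (indicator_of_mem_Qset hp u) h0, mul_one, mul_one] at hbd
  exact ⟨hbd.1.lt_of_ne (Ne.symm hlb), hbd.2.lt_of_ne hub⟩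

end WVar

theorem add_ofMove_mem_Qset (hC : ∀ c ∈ C, ValidCompCon Lx Ux Ly Uy c)
    (hp : p ∈ Qset s0 Ls Us Lx Ux Ly Uy C) {δ : WVar V T → ℝ}
    (hflow : ∀ t, ∑ v, δ ⟨true, v, t⟩ = ∑ v, δ ⟨false, v, t⟩)
    (hsales : ∀ t, ∑ v, p.y v t + ∑ v, δ ⟨false, v, t⟩ ≤ prevStock s0 p.s t)
    (hsupp : ∀ u, δ u ≠ 0 → u.IsFractional Lx Ux Ly Uy p.x p.y ∧
      u.val p.x p.y + δ u ∈ Set.Icc (u.lb Lx Ly) (u.ub Ux Uy)) :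
    p + ofMove δ ∈ Qset s0 Ls Us Lx Ux Ly Uy C := by
  have hval := WVar.val_add_ofMove p δ
  -- a coordinate at `0` or at a bound is not fractional, hence not moved
  have hfixed : ∀ (u : WVar V T) (B : ℝ), (B = 0 ∨ B = u.lb Lx Ly ∨ B = u.ub Ux Uy) →
      u.val p.x p.y = B → u.val (p + ofMove δ).x (p + ofMove δ).y = B := by
    intro u B hB hu
    have hδ : δ u = 0 := by
      by_contra hδ
      exact (hsupp u hδ).1 (by rcases hB with rfl | rfl | rfl <;> simp [hu])
    rw [hval, hu, hδ, add_zero]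
  have hbounds (u : WVar V T) :
      u.lb Lx Ly * u.val (p + ofMove δ).w (p + ofMove δ).z ≤
          u.val (p + ofMove δ).x (p + ofMove δ).y ∧
        u.val (p + ofMove δ).x (p + ofMove δ).y ≤
          u.ub Ux Uy * u.val (p + ofMove δ).w (p + ofMove δ).z := by
    rw [hval, WPoint.w_add_ofMove, WPoint.z_add_ofMove]
    exact bounds_mul_indicator_add (WVar.bounds_of_mem_Qset hp u)
      (WVar.indicator_of_mem_Qset hp u)
      fun hδ => ⟨fun h0 => (hsupp u hδ).1 (Or.inl h0), (hsupp u hδ).2⟩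
  obtain ⟨hbal, hstock, -, hcomp, -, -, hw, hz⟩ := hp
  refine ⟨fun t => ?_, ?_, fun t => ?_, fun c hc => ?_, fun v t => hbounds ⟨false, v, t⟩,
    fun v t => hbounds ⟨true, v, t⟩, ?_, ?_⟩
  · rw [WPoint.s_add_ofMove, WPoint.sum_x_add_ofMove, WPoint.sum_y_add_ofMove, hflow t]
    linarith [hbal t]
  · rwa [WPoint.s_add_ofMove]
  · rw [WPoint.s_add_ofMove, WPoint.sum_y_add_ofMove]
    exact hsales t
  · obtain ⟨-, hB1, hB2⟩ := hC c hc
    rcases mul_eq_zero.1 (hcomp c hc) with h | h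
    · rw [hfixed _ _ hB1 (sub_eq_zero.1 h), sub_self, zero_mul]
    · rw [hfixed _ _ hB2 (sub_eq_zero.1 h), sub_self, mul_zero]
  · rwa [WPoint.w_add_ofMove]
  · rwa [WPoint.z_add_ofMove]

end Qset

section pairMove

def flowSign (b : Bool) : ℝ := if b then 1 else -1

open Classical in
/-- Weighting by `flowSign` (purchases `+1`, sales `-1`) makes the two contributions to the net
inflow `∑ x - ∑ y` cancel. -/
noncomputable def pairMove (u₁ u₂ : WVar V T) : WVar V T → ℝ :=
  Pi.single u₁ (flowSign u₁.isX) - Pi.single u₂ (flowSign u₂.isX)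

variable {u₁ u₂ : WVar V T}

theorem pairMove_apply_left_ne_zero (h : u₁ ≠ u₂) : pairMove u₁ u₂ u₁ ≠ 0 := by
  cases hb : u₁.isX <;> simp [pairMove, flowSign, h, hb]

theorem eq_or_eq_of_pairMove_ne_zero {u : WVar V T} (hu : pairMove u₁ u₂ u ≠ 0) :
    u = u₁ ∨ u = u₂ := by
  by_contra! h
  simp [pairMove, h.1, h.2] at hu

theorem WVar.sum_piSingle_mk [DecidableEq (WVar V T)] (u : WVar V T) (r : ℝ) (b : Bool)
    (t : Fin T) :
    ∑ v, (Pi.single u r : WVar V T → ℝ) ⟨b, v, t⟩ =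
      if u.isX = b ∧ u.t = t then r else 0 := by
  obtain ⟨b', v', t'⟩ := u
  by_cases hb : b' = b <;> by_cases ht : t' = t <;> simp [Pi.single_apply, WVar.mk.injEq, hb, ht]

theorem sum_pairMove_true_eq_false (ht : u₁.t = u₂.t) (t : Fin T) :
    ∑ v, pairMove u₁ u₂ ⟨true, v, t⟩ = ∑ v, pairMove u₁ u₂ ⟨false, v, t⟩ := by
  classical
  simp only [pairMove, Pi.sub_apply, Finset.sum_sub_distrib, WVar.sum_piSingle_mk, ← ht]
  cases u₁.isX <;> cases u₂.isX <;> by_cases h : u₁.t = t <;> simp [flowSign, h]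

end pairMove

theorem WVar.eq_of_isFractional_of_mem_extremePoints {s0 : ℝ} {Ls Us : Fin T → ℝ}
    {Lx Ux Ly Uy : Fin V → Fin T → ℝ} {C : Finset (CompCon V T)} {p : WPoint V T}
    (hC : ∀ c ∈ C, ValidCompCon Lx Ux Ly Uy c)
    (hp : p ∈ (convexHull ℝ (Qset s0 Ls Us Lx Ux Ly Uy C)).extremePoints ℝ)
    {u₁ u₂ : WVar V T} (ht : u₁.t = u₂.t)
    (hlt : ∑ v, p.y v u₁.t < prevStock s0 p.s u₁.t)
    (h₁ : u₁.IsFractional Lx Ux Ly Uy p.x p.y) (h₂ : u₂.IsFractional Lx Ux Ly Uy p.x p.y) :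
    u₁ = u₂ := by
  by_contra hne
  have hpQ := extremePoints_convexHull_subset hp
  have hflow (a : ℝ) (t : Fin T) :
      ∑ v, (a • pairMove u₁ u₂) ⟨true, v, t⟩ =
        ∑ v, (a • pairMove u₁ u₂) ⟨false, v, t⟩ := by
    simp only [Pi.smul_apply, smul_eq_mul, ← Finset.mul_sum, sum_pairMove_true_eq_false ht]
  have hsales : ∀ᶠ a in 𝓝 (0 : ℝ),
      ∀ t, ∑ v, p.y v t + ∑ v, (a • pairMove u₁ u₂) ⟨false, v, t⟩ ≤
        prevStock s0 p.s t := by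
    refine eventually_all.2 fun t => ?_
    simp only [Pi.smul_apply, smul_eq_mul, ← Finset.mul_sum]
    refine eventually_add_mul_le (hpQ.2.2.1 t) fun hsum => ?_
    obtain ⟨v, -, hv⟩ := Finset.exists_ne_zero_of_sum_ne_zero hsum
    have htv : t = u₁.t := by
      rcases eq_or_eq_of_pairMove_ne_zero hv with h | h
      exacts [congrArg WVar.t h, (congrArg WVar.t h).trans ht.symm]
    rwa [htv]
  have hnear {u : WVar V T} (hu : u.IsFractional Lx Ux Ly Uy p.x p.y) :
      ∀ᶠ a in 𝓝 (0 : ℝ),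
        u.val p.x p.y + a * pairMove u₁ u₂ u ∈ Set.Icc (u.lb Lx Ly) (u.ub Ux Uy) :=
    eventually_mem_Icc_add_mul (hu.mem_Ioo hpQ).1 (hu.mem_Ioo hpQ).2 _
  have hsupp : ∀ᶠ a in 𝓝 (0 : ℝ), ∀ u, (a • pairMove u₁ u₂) u ≠ 0 →
      u.IsFractional Lx Ux Ly Uy p.x p.y ∧
        u.val p.x p.y + (a • pairMove u₁ u₂) u ∈ Set.Icc (u.lb Lx Ly) (u.ub Ux Uy) := by
    filter_upwards [hnear h₁, hnear h₂] with a ha₁ ha₂ u hu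
    rcases eq_or_eq_of_pairMove_ne_zero (right_ne_zero_of_mul hu) with rfl | rfl
    exacts [⟨h₁, ha₁⟩, ⟨h₂, ha₂⟩]
  refine ofMove_ne_zero (pairMove u₁ u₂) (pairMove_apply_left_ne_zero hne)
    (eq_zero_of_eventually_add_smul_mem_extremePoints hp ?_)
  filter_upwards [hsales, hsupp] with a hs hb
  rw [← ofMove_smul]
  exact subset_convexHull ℝ _ (add_ofMove_mem_Qset hC hpQ (hflow a) hs hb)

end Moves

theorem extremePoint_at_most_one_fractional_of_sales_lt_general {V T : ℕ} (s0 : ℝ)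
    (Ls Us : Fin T → ℝ) (Lx Ux Ly Uy : Fin V → Fin T → ℝ)
    (C : Finset (CompCon V T))
    (hC : ∀ c ∈ C, ValidCompCon Lx Ux Ly Uy c)
    (p : WPoint V T)
    (hp : p ∈ Set.extremePoints ℝ (convexHull ℝ (Qset s0 Ls Us Lx Ux Ly Uy C)))
    (t : Fin T)
    (hlt : ∑ v, WPoint.y p v t < prevStock s0 (WPoint.s p) t) :
    ({ c : Bool × Fin V |
        if c.1 then WPoint.x p c.2 t ∉ ({0, Lx c.2 t, Ux c.2 t} : Set ℝ)
        else WPoint.y p c.2 t ∉ ({0, Ly c.2 t, Uy c.2 t} : Set ℝ) }).Subsingleton := by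
  rintro ⟨b₁, v₁⟩ h₁ ⟨b₂, v₂⟩ h₂
  have h := WVar.eq_of_isFractional_of_mem_extremePoints
    (u₁ := ⟨b₁, v₁, t⟩) (u₂ := ⟨b₂, v₂, t⟩) hC hp rfl hlt
    (by cases b₁ <;> exact h₁) (by cases b₂ <;> exact h₂)
  obtain ⟨rfl, rfl, -⟩ := WVar.mk.inj h
  rfl

/-- At an extreme point of `P = conv(Q)`, if total sales at time `t` are
strictly less than the previous stock level, then at most one of the `2V` coordinates
`x*_{v,t}`, `y*_{v,t}` fails to be at zero or at its lower or upper bound. -/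
theorem extremePoint_at_most_one_fractional_of_sales_lt {V T : ℕ} (s0 : ℝ)
    (Ls Us : Fin T → ℝ) (Lx Ux Ly Uy : Fin V → Fin T → ℝ)
    (C : Finset (CompCon V T))
    (hLs : ∀ t, 0 ≤ Ls t) (hsLU : ∀ t, Ls t ≤ Us t)
    (hLx : ∀ v t, 0 ≤ Lx v t) (hxLU : ∀ v t, Lx v t ≤ Ux v t)
    (hLy : ∀ v t, 0 ≤ Ly v t) (hyLU : ∀ v t, Ly v t ≤ Uy v t)
    (hC : ∀ c ∈ C, ValidCompCon Lx Ux Ly Uy c)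
    (p : WPoint V T)
    (hp : p ∈ Set.extremePoints ℝ (convexHull ℝ (Qset s0 Ls Us Lx Ux Ly Uy C)))
    (t : Fin T)
    (hlt : ∑ v, WPoint.y p v t < prevStock s0 (WPoint.s p) t) :
    ({ c : Bool × Fin V |
        if c.1 then WPoint.x p c.2 t ∉ ({0, Lx c.2 t, Ux c.2 t} : Set ℝ)
        else WPoint.y p c.2 t ∉ ({0, Ly c.2 t, Uy c.2 t} : Set ℝ) }).Subsingleton :=
  extremePoint_at_most_one_fractional_of_sales_lt_general s0 Ls Us Lx Ux Ly Uy C hC p hp t hlt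
end

section
/- Let (x*, y*, w*, z*, s*) be an extreme point of P = conv(Q) and let t ∈ {1, …, T} be a time period with Σ_{v∈𝒱} y*_{v,t} = s*_{t−1} (where s*_0 = s₀). Then at most one vendor v ∈ 𝒱 has a sales quantity y*_{v,t} not belonging to {0, L^y_{v,t}, U^y_{v,t}}. -/
open scoped BigOperators

/-!
If two vendors `v₁ ≠ v₂` had fractional sales at time `t`, both would have their sale indicator
equal to `1` and sales strictly between their bounds. Moving a small amount `±ε` of sales from
`v₂` to `v₁` keeps every stock level, every bound and every complementarity constraint (whose
constants are `0` or bounds, hence never met by a fractional sale). So both shifted points lie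
in `Q` and `p` is their midpoint, contradicting extremality.
-/

theorem eq_zero_of_add_mem_of_sub_mem_of_mem_extremePoints {𝕜 E : Type*} [Ring 𝕜]
    [LinearOrder 𝕜] [IsStrictOrderedRing 𝕜] [Invertible (2 : 𝕜)] [AddCommGroup E] [Module 𝕜 E]
    {A : Set E} {p d : E} (hp : p ∈ A.extremePoints 𝕜) (hadd : p + d ∈ A) (hsub : p - d ∈ A) :
    d = 0 :=
  add_eq_left.mp (hp.2 hadd hsub (mem_openSegment_add_sub p d))

lemma eq_one_and_exists_pos_margin {l u z a : ℝ} (hz : z = 0 ∨ z = 1)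
    (hl : l * z ≤ a) (hu : a ≤ u * z) (ha : a ∉ ({0, l, u} : Set ℝ)) :
    z = 1 ∧ ∃ ε > 0, l + ε ≤ a ∧ a + ε ≤ u := by
  simp only [Set.mem_insert_iff, Set.mem_singleton_iff, not_or] at ha
  obtain ⟨ha0, hal, hau⟩ := ha
  rcases hz with rfl | rfl
  · exact absurd (le_antisymm (by simpa using hu) (by simpa using hl)) ha0
  · rw [mul_one] at hl hu
    have hl' := lt_of_le_of_ne hl (Ne.symm hal)
    have hu' := lt_of_le_of_ne hu hau
    refine ⟨rfl, min (a - l) (u - a), lt_min (by linarith) (by linarith), ?_, ?_⟩ <;>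
      linarith [min_le_left (a - l) (u - a), min_le_right (a - l) (u - a)]

lemma mul_le_add_mul_and_add_mul_le_mul {l u z a e d ε : ℝ} (h : l * z ≤ a ∧ a ≤ u * z)
    (hd : |d| ≤ 1) (he : |e| ≤ ε) (hint : d ≠ 0 → z = 1 ∧ l + ε ≤ a ∧ a + ε ≤ u) :
    l * z ≤ a + e * d ∧ a + e * d ≤ u * z := by
  by_cases hd0 : d = 0
  · simpa [hd0] using h
  obtain ⟨rfl, hl, hu⟩ := hint hd0
  have hed : |e * d| ≤ ε := by
    rw [abs_mul]
    nlinarith [abs_nonneg e, abs_nonneg d]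
  have := abs_le.mp hed
  constructor <;> linarith

namespace WVar

variable {V T : ℕ} {Lx Ux Ly Uy x y y' : Fin V → Fin T → ℝ} {B : ℝ}

/-- An admissible constant `B` is `0` or a bound, so a sales variable equal to `B` is not
fractional and is therefore left unchanged. -/
lemma val_eq_of_val_eq (u : WVar V T) (hB : B = 0 ∨ B = u.lb Lx Ly ∨ B = u.ub Ux Uy)
    (hy' : ∀ v t, y' v t ≠ y v t → y v t ∉ ({0, Ly v t, Uy v t} : Set ℝ))
    (h : u.val x y = B) : u.val x y' = B := by
  cases hX : u.isX
  · simp only [val, lb, ub, hX, Bool.false_eq_true, if_false] at h hB ⊢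
    by_contra hne
    refine hy' u.v u.t (by rwa [h]) ?_
    rw [h]
    rcases hB with rfl | rfl | rfl <;> simp
  · simpa [val, hX] using h

end WVar

lemma CompCon.holds_of_sales_change {V T : ℕ} {Lx Ux Ly Uy x y y' : Fin V → Fin T → ℝ}
    {c : CompCon V T} (hc : ValidCompCon Lx Ux Ly Uy c)
    (hy' : ∀ v t, y' v t ≠ y v t → y v t ∉ ({0, Ly v t, Uy v t} : Set ℝ))
    (h : (c.V1.val x y - c.B1) * (c.V2.val x y - c.B2) = 0) :
    (c.V1.val x y' - c.B1) * (c.V2.val x y' - c.B2) = 0 := by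
  obtain ⟨-, hB1, hB2⟩ := hc
  rcases mul_eq_zero.mp h with h1 | h2
  · rw [c.V1.val_eq_of_val_eq hB1 hy' (sub_eq_zero.mp h1), sub_self, zero_mul]
  · rw [c.V2.val_eq_of_val_eq hB2 hy' (sub_eq_zero.mp h2), sub_self, mul_zero]

section Qset

variable {V T : ℕ} {s0 : ℝ} {Ls Us : Fin T → ℝ} {Lx Ux Ly Uy : Fin V → Fin T → ℝ}
  {C : Finset (CompCon V T)}

lemma mem_Qset_of_sales_change (hC : ∀ c ∈ C, ValidCompCon Lx Ux Ly Uy c) {p q : WPoint V T}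
    (hp : p ∈ Qset s0 Ls Us Lx Ux Ly Uy C)
    (hx : q.x = p.x) (hw : q.w = p.w) (hz : q.z = p.z) (hs : q.s = p.s)
    (hsum : ∀ t, ∑ v, q.y v t = ∑ v, p.y v t)
    (hbd : ∀ v t, Ly v t * q.z v t ≤ q.y v t ∧ q.y v t ≤ Uy v t * q.z v t)
    (hfrac : ∀ v t, q.y v t ≠ p.y v t → p.y v t ∉ ({0, Ly v t, Uy v t} : Set ℝ)) :
    q ∈ Qset s0 Ls Us Lx Ux Ly Uy C := by
  obtain ⟨hbal, hsb, hsales, hcomp, -, hxw, hwb, hzb⟩ := hp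
  refine ⟨fun t ↦ ?_, by rwa [hs], fun t ↦ ?_, fun c hc ↦ ?_, hbd, by rwa [hx, hw],
    by rwa [hw], by rwa [hz]⟩
  · rw [hsum, hx, hs]
    exact hbal t
  · rw [hsum, hs]
    exact hsales t
  · rw [hx]
    exact CompCon.holds_of_sales_change (hC c hc) hfrac (hcomp c hc)

def salesShift (v₁ v₂ : Fin V) (t : Fin T) : Fin V → Fin T → ℝ :=
  fun v t' ↦ if t' = t then (if v = v₁ then 1 else 0) - (if v = v₂ then 1 else 0) else 0

lemma sum_salesShift (v₁ v₂ : Fin V) (t t' : Fin T) : ∑ v, salesShift v₁ v₂ t v t' = 0 := by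
  by_cases h : t' = t <;> simp [salesShift, h, Finset.sum_sub_distrib]

lemma abs_salesShift_le_one (v₁ v₂ : Fin V) (t : Fin T) (v : Fin V) (t' : Fin T) :
    |salesShift v₁ v₂ t v t'| ≤ 1 := by
  unfold salesShift
  split_ifs <;> norm_num

lemma eq_and_eq_or_eq_of_salesShift_ne_zero {v₁ v₂ v : Fin V} {t t' : Fin T}
    (h : salesShift v₁ v₂ t v t' ≠ 0) : t' = t ∧ (v = v₁ ∨ v = v₂) := by
  unfold salesShift at h
  split_ifs at h <;> simp_all

lemma salesShift_self_left {v₁ v₂ : Fin V} (hne : v₁ ≠ v₂) (t : Fin T) :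
    salesShift v₁ v₂ t v₁ t = 1 := by
  simp [salesShift, hne]

lemma exists_pos_add_smul_salesShift_mem_Qset (hC : ∀ c ∈ C, ValidCompCon Lx Ux Ly Uy c)
    {p : WPoint V T} (hp : p ∈ Qset s0 Ls Us Lx Ux Ly Uy C) {v₁ v₂ : Fin V} {t : Fin T}
    (hv₁ : p.y v₁ t ∉ ({0, Ly v₁ t, Uy v₁ t} : Set ℝ))
    (hv₂ : p.y v₂ t ∉ ({0, Ly v₂ t, Uy v₂ t} : Set ℝ)) :
    ∃ ε > 0, ∀ e : ℝ, |e| ≤ ε →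
      p + e • ((0, salesShift v₁ v₂ t, 0, 0, 0) : WPoint V T) ∈ Qset s0 Ls Us Lx Ux Ly Uy C := by
  obtain ⟨-, -, -, -, hyz, -, -, hzb⟩ := id hp
  obtain ⟨hz₁, ε₁, hε₁, hm₁⟩ :=
    eq_one_and_exists_pos_margin (hzb v₁ t) (hyz v₁ t).1 (hyz v₁ t).2 hv₁
  obtain ⟨hz₂, ε₂, hε₂, hm₂⟩ :=
    eq_one_and_exists_pos_margin (hzb v₂ t) (hyz v₂ t).1 (hyz v₂ t).2 hv₂
  have hmargin : ∀ v, v = v₁ ∨ v = v₂ →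
      p.z v t = 1 ∧ Ly v t + min ε₁ ε₂ ≤ p.y v t ∧ p.y v t + min ε₁ ε₂ ≤ Uy v t := by
    rintro v (rfl | rfl)
    · exact ⟨hz₁, by linarith [min_le_left ε₁ ε₂], by linarith [min_le_left ε₁ ε₂]⟩
    · exact ⟨hz₂, by linarith [min_le_right ε₁ ε₂], by linarith [min_le_right ε₁ ε₂]⟩
  refine ⟨min ε₁ ε₂, lt_min hε₁ hε₂, fun e he ↦ ?_⟩
  set q := p + e • ((0, salesShift v₁ v₂ t, 0, 0, 0) : WPoint V T)
  have hy : ∀ v t', q.y v t' = p.y v t' + e * salesShift v₁ v₂ t v t' := fun _ _ ↦ rfl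
  have hz : q.z = p.z := by simp [q, WPoint.z]
  refine mem_Qset_of_sales_change hC hp (by simp [q, WPoint.x]) (by simp [q, WPoint.w]) hz
    (by simp [q, WPoint.s]) (fun t' ↦ ?_) (fun v t' ↦ ?_) (fun v t' h ↦ ?_)
  · simp only [hy, Finset.sum_add_distrib, ← Finset.mul_sum, sum_salesShift, mul_zero, add_zero]
  · rw [hy, hz]
    refine mul_le_add_mul_and_add_mul_le_mul (hyz v t') (abs_salesShift_le_one ..) he
      fun h ↦ ?_
    obtain ⟨rfl, hv⟩ := eq_and_eq_or_eq_of_salesShift_ne_zero h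
    exact hmargin v hv
  · obtain ⟨rfl, rfl | rfl⟩ :=
      eq_and_eq_or_eq_of_salesShift_ne_zero (right_ne_zero_of_mul (by simpa [hy] using h))
    exacts [hv₁, hv₂]

end Qset

theorem extremePoint_at_most_one_fractional_sale_of_sales_eq_general {V T : ℕ} (s0 : ℝ)
    (Ls Us : Fin T → ℝ) (Lx Ux Ly Uy : Fin V → Fin T → ℝ)
    (C : Finset (CompCon V T))
    (hC : ∀ c ∈ C, ValidCompCon Lx Ux Ly Uy c)
    (p : WPoint V T)
    (hp : p ∈ Set.extremePoints ℝ (convexHull ℝ (Qset s0 Ls Us Lx Ux Ly Uy C)))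
    (t : Fin T) :
    ({ v : Fin V | WPoint.y p v t ∉ ({0, Ly v t, Uy v t} : Set ℝ) }).Subsingleton := by
  intro v₁ hv₁ v₂ hv₂
  by_contra hne
  obtain ⟨ε, hε, hmem⟩ :=
    exists_pos_add_smul_salesShift_mem_Qset hC (extremePoints_convexHull_subset hp) hv₁ hv₂
  have hδ := eq_zero_of_add_mem_of_sub_mem_of_mem_extremePoints hp
    (subset_convexHull ℝ _ (hmem ε (abs_of_pos hε).le))
    (by simpa [sub_eq_add_neg] using subset_convexHull ℝ _ (hmem (-ε) (by simp [abs_of_pos hε])))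
  have hy₁ := congrFun (congrFun (congrArg (fun q : WPoint V T ↦ q.y) hδ) v₁) t
  simp [WPoint.y, salesShift_self_left hne, hε.ne'] at hy₁

/-- At an extreme point of `P = conv(Q)`, if total sales at time `t` equal
the previous stock level, then at most one vendor's sales quantity `y*_{v,t}` fails to be at
zero or at its lower or upper bound. -/
theorem extremePoint_at_most_one_fractional_sale_of_sales_eq {V T : ℕ} (s0 : ℝ)
    (Ls Us : Fin T → ℝ) (Lx Ux Ly Uy : Fin V → Fin T → ℝ)
    (C : Finset (CompCon V T))
    (hLs : ∀ t, 0 ≤ Ls t) (hsLU : ∀ t, Ls t ≤ Us t)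
    (hLx : ∀ v t, 0 ≤ Lx v t) (hxLU : ∀ v t, Lx v t ≤ Ux v t)
    (hLy : ∀ v t, 0 ≤ Ly v t) (hyLU : ∀ v t, Ly v t ≤ Uy v t)
    (hC : ∀ c ∈ C, ValidCompCon Lx Ux Ly Uy c)
    (p : WPoint V T)
    (hp : p ∈ Set.extremePoints ℝ (convexHull ℝ (Qset s0 Ls Us Lx Ux Ly Uy C)))
    (t : Fin T)
    (heq : ∑ v, WPoint.y p v t = prevStock s0 (WPoint.s p) t) :
    ({ v : Fin V | WPoint.y p v t ∉ ({0, Ly v t, Uy v t} : Set ℝ) }).Subsingleton :=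
  extremePoint_at_most_one_fractional_sale_of_sales_eq_general s0 Ls Us Lx Ux Ly Uy C hC p hp t
end

section
/- Let x, y : 𝒱 × 𝒯 → ℝ and s : {0, 1, …, T} → ℝ satisfy s_0 = s₀ and the flow-balance equations s_t = s_{t−1} − Σ_{v∈𝒱} y_{v,t} + Σ_{v∈𝒱} x_{v,t} for all t ∈ 𝒯. Suppose there exist indices t′, τ ∈ {0, 1, …, T} such that s_{t′} ∈ {0, s₀} ∪ {L^s_t : t ∈ 𝒯} ∪ {U^s_t : t ∈ 𝒯}, and for every time t with min(t′, τ) < t ≤ max(t′, τ) and every vendor v ∈ 𝒱 one has x_{v,t} ∈ {0, L^x_{v,t}, U^x_{v,t}} and y_{v,t} ∈ {0, L^y_{v,t}, U^y_{v,t}}. Then s_τ belongs to the set S = { K − Σ_{t∈𝒯} Σ_{v∈𝒱} (λ¹_{v,t} L^y_{v,t} + λ²_{v,t} U^y_{v,t} + λ³_{v,t} L^x_{v,t} + λ⁴_{v,t} U^x_{v,t}) : K ∈ {0, s₀, L^s_1, …, L^s_T, U^s_1, …, U^s_T}, λ^j_{v,t} ∈ {−1, 0, 1} for j = 1,2,3,4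 }. -/
open scoped BigOperators

/-- If the stock trajectory satisfies the flow-balance equations, the stock
level at some time `t'` lies in `{0, s₀} ∪ {Lˢ_t} ∪ {Uˢ_t}`, and between `t'` and `τ` every
purchase and sale is at zero or at its lower or upper bound, then `s_τ ∈ S`. -/
theorem stock_mem_Sset_of_bang_bang {V T : ℕ} (s0 : ℝ)
    (Ls Us : Fin T → ℝ) (Lx Ux Ly Uy : Fin V → Fin T → ℝ)
    (x y : Fin V → Fin T → ℝ) (s : Fin (T + 1) → ℝ)
    (hs0 : s 0 = s0)
    (hflow : ∀ t : Fin T, s t.succ = s t.castSucc - ∑ v, y v t + ∑ v, x v t)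
    (t' τ : Fin (T + 1))
    (hK : s t' = 0 ∨ s t' = s0 ∨ (∃ t, s t' = Ls t) ∨ (∃ t, s t' = Us t))
    (hbetween : ∀ t : Fin T,
      min (t' : ℕ) (τ : ℕ) < (t : ℕ) + 1 → (t : ℕ) + 1 ≤ max (t' : ℕ) (τ : ℕ) →
      (∀ v, x v t = 0 ∨ x v t = Lx v t ∨ x v t = Ux v t) ∧
      (∀ v, y v t = 0 ∨ y v t = Ly v t ∨ y v t = Uy v t)) :
    s τ ∈ Sset s0 Ls Us Lx Ux Ly Uy := by
  classical
  set d : Fin T → ℝ := fun t => ∑ v, x v t - ∑ v, y v t with hd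
  -- telescoping
  have key : ∀ c : Fin (T+1), s c = s 0 + ∑ t : Fin T,
      if ((t : ℕ) < (c : ℕ)) then d t else 0 := by
    intro c
    induction c using Fin.induction with
    | zero => simp
    | succ i ih =>
      have hstep : s i.succ = s i.castSucc + d i := by
        rw [hflow i]; simp [hd]; ring
      rw [hstep, ih]
      have hsplit : ∀ t : Fin T,
          (if ((t : ℕ) < ((i.succ : Fin (T+1)) : ℕ)) then d t else 0)
          = (if ((t : ℕ) < ((i.castSucc : Fin (T+1)) : ℕ)) then d t else 0)
            + (if t = i then d t else 0) := by
        intro t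
        by_cases h2 : t = i
        · subst h2
          simp
        · have hne : (t : ℕ) ≠ (i : ℕ) := fun h => h2 (Fin.ext h)
          by_cases h1 : (t : ℕ) < (i : ℕ)
          · have h1' : (t : ℕ) < (i : ℕ) + 1 := Nat.lt_succ_of_lt h1
            simp [Fin.val_succ, Fin.coe_castSucc, h1, h1', h2]
          · have h1' : ¬ (t : ℕ) < (i : ℕ) + 1 := by omega
            simp [Fin.val_succ, Fin.coe_castSucc, h1, h1', h2]
      rw [Finset.sum_congr rfl (fun t _ => hsplit t), Finset.sum_add_distrib,
        Finset.sum_ite_eq' Finset.univ i d]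
      simp
      ring
  set σ : ℝ := if (t' : ℕ) ≤ (τ : ℕ) then 1 else -1 with hσ
  have hσ2 : σ = 1 ∨ σ = -1 := by
    by_cases h : (t' : ℕ) ≤ (τ : ℕ) <;> simp [hσ, h]
  set B : Fin T → Prop := fun t =>
    min (t' : ℕ) (τ : ℕ) < (t : ℕ) + 1 ∧ (t : ℕ) + 1 ≤ max (t' : ℕ) (τ : ℕ) with hB
  set l0 : Fin V → Fin T → ℝ := fun v t => if B t ∧ y v t = Ly v t then σ else 0 with hl0
  set l1 : Fin V → Fin T → ℝ :=
    fun v t => if B t ∧ ¬ y v t = Ly v t ∧ y v t = Uy v t then σ else 0 with hl1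
  set l2 : Fin V → Fin T → ℝ := fun v t => if B t ∧ x v t = Lx v t then -σ else 0 with hl2
  set l3 : Fin V → Fin T → ℝ :=
    fun v t => if B t ∧ ¬ x v t = Lx v t ∧ x v t = Ux v t then -σ else 0 with hl3
  refine ⟨s t', ![l0, l1, l2, l3], hK, ?_, ?_⟩
  · intro j v t
    have hone : ∀ l : Fin V → Fin T → ℝ, (l = l0 ∨ l = l1 ∨ l = l2 ∨ l = l3) →
        (l v t = -1 ∨ l v t = 0 ∨ l v t = 1) := by
      rintro l (rfl | rfl | rfl | rfl) <;>
        simp only [hl0, hl1, hl2, hl3] <;> split_ifs <;>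
        rcases hσ2 with h | h <;> simp [h]
    have hj : ![l0, l1, l2, l3] j = l0 ∨ ![l0, l1, l2, l3] j = l1 ∨
        ![l0, l1, l2, l3] j = l2 ∨ ![l0, l1, l2, l3] j = l3 := by
      fin_cases j <;> simp
    rcases hj with h | h | h | h <;> rw [h] <;> exact hone _ (by tauto)
  · -- the main identity
    have hterm : ∀ t : Fin T, ∀ v : Fin V,
        l0 v t * Ly v t + l1 v t * Uy v t + l2 v t * Lx v t + l3 v t * Ux v t
          = if B t then σ * (y v t - x v t) else 0 := by
      intro t v
      by_cases hBt : B t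
      · obtain ⟨hxv, hyv⟩ := hbetween t hBt.1 hBt.2
        have hy : l0 v t * Ly v t + l1 v t * Uy v t = σ * y v t := by
          simp only [hl0, hl1]
          by_cases hyL : y v t = Ly v t
          · rw [if_pos ⟨hBt, hyL⟩, if_neg (fun h => h.2.1 hyL), hyL]; ring
          · by_cases hyU : y v t = Uy v t
            · rw [if_neg (fun h => hyL h.2), if_pos ⟨hBt, hyL, hyU⟩, hyU]; ring
            · have hy0 : y v t = 0 := by
                rcases hyv v with h | h | h
                · exact h
                · exact absurd h hyL
                · exact absurd h hyU
              rw [if_neg (fun h => hyL h.2), if_neg (fun h => hyU h.2.2), hy0]; ring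
        have hx : l2 v t * Lx v t + l3 v t * Ux v t = -(σ * x v t) := by
          simp only [hl2, hl3]
          by_cases hxL : x v t = Lx v t
          · rw [if_pos ⟨hBt, hxL⟩, if_neg (fun h => h.2.1 hxL), hxL]; ring
          · by_cases hxU : x v t = Ux v t
            · rw [if_neg (fun h => hxL h.2), if_pos ⟨hBt, hxL, hxU⟩, hxU]; ring
            · have hx0 : x v t = 0 := by
                rcases hxv v with h | h | h
                · exact h
                · exact absurd h hxL
                · exact absurd h hxU
              rw [if_neg (fun h => hxL h.2), if_neg (fun h => hxU h.2.2), hx0]; ring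
        rw [add_assoc, hx, if_pos hBt]
        rw [show l0 v t * Ly v t + l1 v t * Uy v t + -(σ * x v t)
            = (l0 v t * Ly v t + l1 v t * Uy v t) + -(σ * x v t) by ring, hy]
        ring
      · simp only [hl0, hl1, hl2, hl3]
        rw [if_neg hBt, if_neg (fun h => hBt h.1), if_neg (fun h => hBt h.1),
          if_neg (fun h => hBt h.1), if_neg (fun h => hBt h.1)]
        ring
    have hsumv : ∀ t : Fin T,
        (∑ v, (l0 v t * Ly v t + l1 v t * Uy v t + l2 v t * Lx v t + l3 v t * Ux v t))
          = -(if B t then σ * d t else 0) := by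
      intro t
      by_cases hBt : B t
      · rw [Finset.sum_congr rfl (fun v _ => (hterm t v).trans (if_pos hBt)), if_pos hBt]
        simp only [hd, mul_sub, Finset.mul_sum, Finset.sum_sub_distrib]
        ring
      · rw [Finset.sum_congr rfl (fun v _ => (hterm t v).trans (if_neg hBt)), if_neg hBt]
        simp
    have hBind : ∀ t : Fin T, (if B t then σ * d t else 0)
        = (if ((t : ℕ) < (τ : ℕ)) then d t else 0)
          - (if ((t : ℕ) < (t' : ℕ)) then d t else 0) := by
      intro t
      have hBiff : B t ↔ (min (t' : ℕ) (τ : ℕ) ≤ (t : ℕ) ∧ (t : ℕ) < max (t' : ℕ) (τ : ℕ)) := by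
        constructor <;> intro h <;> exact ⟨by omega, by omega⟩
      by_cases hc : (t' : ℕ) ≤ (τ : ℕ)
      · have hσ1 : σ = 1 := if_pos hc
        by_cases hBt : B t
        · have h1 : (t : ℕ) < (τ : ℕ) := by have := hBiff.mp hBt; omega
          have h2 : ¬ (t : ℕ) < (t' : ℕ) := by have := hBiff.mp hBt; omega
          rw [if_pos hBt, if_pos h1, if_neg h2, hσ1]; ring
        · have hnB := (not_iff_not.mpr hBiff).mp hBt
          by_cases h1 : (t : ℕ) < (τ : ℕ)
          · have h2 : (t : ℕ) < (t' : ℕ) := by omega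
            rw [if_neg hBt, if_pos h1, if_pos h2]; ring
          · have h2 : ¬ (t : ℕ) < (t' : ℕ) := by omega
            rw [if_neg hBt, if_neg h1, if_neg h2]; ring
      · have hσ1 : σ = -1 := if_neg hc
        by_cases hBt : B t
        · have h1 : ¬ (t : ℕ) < (τ : ℕ) := by have := hBiff.mp hBt; omega
          have h2 : (t : ℕ) < (t' : ℕ) := by have := hBiff.mp hBt; omega
          rw [if_pos hBt, if_neg h1, if_pos h2, hσ1]; ring
        · have hnB := (not_iff_not.mpr hBiff).mp hBt
          by_cases h1 : (t : ℕ) < (τ : ℕ)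
          · have h2 : (t : ℕ) < (t' : ℕ) := by omega
            rw [if_neg hBt, if_pos h1, if_pos h2]; ring
          · have h2 : ¬ (t : ℕ) < (t' : ℕ) := by omega
            rw [if_neg hBt, if_neg h1, if_neg h2]; ring
    have e0 : (![l0, l1, l2, l3] : Fin 4 → Fin V → Fin T → ℝ) 0 = l0 := by simp
    have e1 : (![l0, l1, l2, l3] : Fin 4 → Fin V → Fin T → ℝ) 1 = l1 := by simp
    have e2 : (![l0, l1, l2, l3] : Fin 4 → Fin V → Fin T → ℝ) 2 = l2 := by simp
    have e3 : (![l0, l1, l2, l3] : Fin 4 → Fin V → Fin T → ℝ) 3 = l3 := by simp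
    simp only [e0, e1, e2, e3]
    rw [Finset.sum_congr rfl (fun t _ => hsumv t)]
    have kτ := key τ
    have kt := key t'
    rw [Finset.sum_neg_distrib]
    rw [Finset.sum_congr rfl (fun t _ => hBind t), Finset.sum_sub_distrib]
    linarith [kτ, kt]
end

section
/- Let 0 < U₁ < U₂ < U₃ and c₁, c₂, c₃ be real numbers, and let x₁, x₂, x₃ ≥ 0 satisfy x₁ ≤ U₁, x₂ ≤ U₂ − U₁, x₃ ≤ U₃ − U₂, (x₁ − U₁)·x₂ = 0, and (x₂ − (U₂ − U₁))·x₃ = 0. Set x = x₁ + x₂ + x₃. Then the total purchase cost satisfies c₁x₁ + c₂x₂ + c₃x₃ = c₁·min(x, U₁) + c₂·min(max(x − U₁, 0), U₂ − U₁) + c₃·max(x − U₂, 0); that is, the three-vendor gadget with per-unit costs c₁, c₂, c₃ prices a total purchase of x units according to the piecewise-linear surge cost with per-unit rate c₁ on [0, U₁], c₂ on (U₁, U₂], and c₃ on (U₂, U₃]. -/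
/-- The three-vendor surge-pricing gadget with per-unit costs `c₁, c₂, c₃`
prices a total purchase of `x = x₁ + x₂ + x₃` units according to the piecewise-linear surge
cost with rate `c₁` on `[0, U₁]`, `c₂` on `(U₁, U₂]`, and `c₃` on `(U₂, U₃]`. -/
theorem surge_gadget_cost (U₁ U₂ U₃ c₁ c₂ c₃ x₁ x₂ x₃ : ℝ)
    (hU₁ : 0 < U₁) (hU₁₂ : U₁ < U₂) (hU₂₃ : U₂ < U₃)
    (hx₁ : 0 ≤ x₁) (hx₂ : 0 ≤ x₂) (hx₃ : 0 ≤ x₃)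
    (hb₁ : x₁ ≤ U₁) (hb₂ : x₂ ≤ U₂ - U₁) (hb₃ : x₃ ≤ U₃ - U₂)
    (hc₁ : (x₁ - U₁) * x₂ = 0) (hc₂ : (x₂ - (U₂ - U₁)) * x₃ = 0) :
    c₁ * x₁ + c₂ * x₂ + c₃ * x₃ =
      c₁ * min (x₁ + x₂ + x₃) U₁ +
      c₂ * min (max (x₁ + x₂ + x₃ - U₁) 0) (U₂ - U₁) +
      c₃ * max (x₁ + x₂ + x₃ - U₂) 0 := by
  rcases mul_eq_zero.1 hc₂ with h2 | h2
  · -- x₂ = U₂ - U₁, so x₂ > 0 hence x₁ = U₁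
    have e2 : x₂ = U₂ - U₁ := by linarith
    have e1 : x₁ = U₁ := by
      rcases mul_eq_zero.1 hc₁ with h | h
      · linarith
      · linarith
    subst e1; subst e2
    rw [min_eq_right (by linarith), max_eq_left (by linarith),
        min_eq_right (by linarith), max_eq_left (by linarith)]
    ring
  · subst h2
    rcases mul_eq_zero.1 hc₁ with h1 | h1
    · -- x₁ = U₁, x₃ = 0
      have e1 : x₁ = U₁ := by linarith
      subst e1
      rw [min_eq_right (by linarith), max_eq_left (by linarith),
          min_eq_left (by linarith), max_eq_right (by linarith)]
      ring
    · -- x₂ = 0, x₃ = 0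
      subst h1
      rw [min_eq_left (by linarith), max_eq_right (by linarith),
          max_eq_right (by linarith)]
      simp
      right; linarith
end
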